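/- arXiv:2110.03891 — 5 statements merged into one kernel-verified Lean document; each statement's English description precedes it below -/
import Mathlib

section
/- Define the potential function ξ(t) = L(w(t)) + (β/(2·η·(1−β)))·‖w(t) − w(t−1)‖² and the constant C₁ = σ_max²·H₀·η/(2N) (so C₁ < 1 under the learning-rate condition). Then for every integer t ≥ 1, the GDM iterates satisfy ξ(t) ≥ ξ(t+1) + ((1−C₁)/η)·‖w(t+1) − w(t)‖². -/
open Filter Topology RealInnerProductSpace MeasureTheory

set_option linter.unusedVariables false
set_option maxHeartbeats 1000000

private lemma adjoint_bound {d N : ℕ} (x : Fin N → EuclideanSpace ℝ (Fin d))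
    (σmax : ℝ) (hσpos : 0 < σmax)
    (hσ : ∀ c : Fin N → ℝ, ‖∑ i, c i • x i‖ ≤ σmax * Real.sqrt (∑ i, (c i) ^ 2))
    (v : EuclideanSpace ℝ (Fin d)) :
    Real.sqrt (∑ i, ⟪v, x i⟫ ^ 2) ≤ σmax * ‖v‖ := by
  set S : ℝ := ∑ i, ⟪v, x i⟫ ^ 2 with hSdef
  have hS0 : 0 ≤ S := Finset.sum_nonneg fun i _ => sq_nonneg _
  have h1 : S = ⟪v, ∑ i, ⟪v, x i⟫ • x i⟫ := by
    rw [hSdef, inner_sum]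
    exact Finset.sum_congr rfl fun i _ => by rw [real_inner_smul_right, pow_two]
  have h2 : S ≤ ‖v‖ * (σmax * Real.sqrt S) := by
    calc S ≤ ‖v‖ * ‖∑ i, ⟪v, x i⟫ • x i‖ := h1 ▸ real_inner_le_norm _ _
    _ ≤ ‖v‖ * (σmax * Real.sqrt S) := by
        have := hσ (fun i => ⟪v, x i⟫)
        exact mul_le_mul_of_nonneg_left this (norm_nonneg v)
  rcases eq_or_lt_of_le (Real.sqrt_nonneg S) with h | h
  · rw [← h]; positivity
  · have hs : Real.sqrt S * Real.sqrt S = S := Real.mul_self_sqrt hS0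
    nlinarith [h2, h, hs]

private lemma gdm_descent {d N : ℕ} (hN : 1 ≤ N) (x : Fin N → EuclideanSpace ℝ (Fin d))
    (ℓ ℓ' : ℝ → ℝ) (hdiff : ∀ s : ℝ, HasDerivAt ℓ (ℓ' s) s)
    (σmax : ℝ) (hσpos : 0 < σmax)
    (hσ : ∀ c : Fin N → ℝ, ‖∑ i, c i • x i‖ ≤ σmax * Real.sqrt (∑ i, (c i) ^ 2))
    (s₀ H₀ : ℝ) (hH₀pos : 0 < H₀)
    (hH₀ : ∀ a b : ℝ, s₀ ≤ a → s₀ ≤ b → |ℓ' a - ℓ' b| ≤ H₀ * |a - b|)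
    (W Δ : EuclideanSpace ℝ (Fin d)) (r : ℝ) (hr0 : 0 ≤ r)
    (hseg : ∀ lam ∈ Set.Icc (0:ℝ) r, ∀ i, s₀ ≤ ⟪W, x i⟫ + lam * ⟪Δ, x i⟫) :
    (1/(N:ℝ)) * ∑ i, ℓ (⟪W, x i⟫ + r * ⟪Δ, x i⟫) ≤
      (1/(N:ℝ)) * ∑ i, ℓ ⟪W, x i⟫
      + r * ((1/(N:ℝ)) * ∑ i, ℓ' ⟪W, x i⟫ * ⟪Δ, x i⟫)
      + (σmax ^ 2 * H₀ / (2 * (N:ℝ))) * r ^ 2 * ‖Δ‖ ^ 2 := by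
  have hn : (0:ℝ) < N := by exact_mod_cast Nat.lt_of_lt_of_le Nat.zero_lt_one hN
  set a : Fin N → ℝ := fun i => ⟪W, x i⟫ with ha
  set b : Fin N → ℝ := fun i => ⟪Δ, x i⟫ with hb
  set K : ℝ := σmax ^ 2 * H₀ / N with hK
  set f : ℝ → ℝ := fun lam => (1/(N:ℝ)) * ∑ i, ℓ (a i + lam * b i) with hf
  set f' : ℝ → ℝ := fun lam => (1/(N:ℝ)) * ∑ i, ℓ' (a i + lam * b i) * b i with hf'
  have hfd : ∀ lam : ℝ, HasDerivAt f (f' lam) lam := by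
    intro lam
    apply HasDerivAt.const_mul
    apply HasDerivAt.fun_sum
    intro i _
    have h1 : HasDerivAt (fun l : ℝ => a i + l * b i) (b i) lam := by
      simpa using ((hasDerivAt_id lam).mul_const (b i)).const_add (a i)
    exact ((hdiff (a i + lam * b i)).comp lam h1)
  have hbound : Real.sqrt (∑ i, b i ^ 2) ≤ σmax * ‖Δ‖ := adjoint_bound x σmax hσpos hσ Δ
  have hlip : ∀ lam ∈ Set.Icc (0:ℝ) r, f' lam - f' 0 ≤ K * lam * ‖Δ‖ ^ 2 := by
    intro lam hlam
    obtain ⟨hl0, hlr⟩ := hlam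
    set c : Fin N → ℝ := fun i => ℓ' (a i + lam * b i) - ℓ' (a i) with hc
    have hdiff0 : f' lam - f' 0 = (1/(N:ℝ)) * ∑ i, c i * b i := by
      have he : ∀ i : Fin N, c i * b i = ℓ' (a i + lam * b i) * b i - ℓ' (a i + 0 * b i) * b i := by
        intro i; simp only [hc]; ring
      rw [Finset.sum_congr rfl (fun i _ => he i), Finset.sum_sub_distrib, mul_sub]
    have hcb : ∑ i, c i * b i = ⟪Δ, ∑ i, c i • x i⟫ := by
      rw [inner_sum]
      refine Finset.sum_congr rfl fun i _ => ?_
      rw [real_inner_smul_right]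
    have hci : ∀ i, |c i| ≤ H₀ * (lam * |b i|) := by
      intro i
      have h0i := hseg 0 ⟨le_refl 0, hr0⟩ i
      have hli := hseg lam ⟨hl0, hlr⟩ i
      simp only [zero_mul, add_zero] at h0i
      have hh := hH₀ (a i + lam * b i) (a i) hli h0i
      calc |c i| = |ℓ' (a i + lam * b i) - ℓ' (a i)| := rfl
      _ ≤ H₀ * |a i + lam * b i - a i| := hh
      _ = H₀ * (lam * |b i|) := by
          rw [add_sub_cancel_left, abs_mul, abs_of_nonneg hl0]
    have hsum : ∑ i, c i ^ 2 ≤ (H₀ * lam) ^ 2 * ∑ i, b i ^ 2 := by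
      rw [Finset.mul_sum]
      apply Finset.sum_le_sum
      intro i _
      have h := hci i
      calc c i ^ 2 = |c i| ^ 2 := (sq_abs _).symm
      _ ≤ (H₀ * (lam * |b i|)) ^ 2 := by
          apply pow_le_pow_left₀ (abs_nonneg _) h
      _ = (H₀ * lam) ^ 2 * b i ^ 2 := by rw [mul_pow, mul_pow, sq_abs]; ring
    have hsqrt : Real.sqrt (∑ i, c i ^ 2) ≤ H₀ * lam * Real.sqrt (∑ i, b i ^ 2) := by
      calc Real.sqrt (∑ i, c i ^ 2) ≤ Real.sqrt ((H₀ * lam) ^ 2 * ∑ i, b i ^ 2) :=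
            Real.sqrt_le_sqrt hsum
      _ = (H₀ * lam) * Real.sqrt (∑ i, b i ^ 2) := by
          rw [Real.sqrt_mul (sq_nonneg _), Real.sqrt_sq (by positivity)]
    have hnorm : ‖∑ i, c i • x i‖ ≤ σmax * (H₀ * lam * (σmax * ‖Δ‖)) := by
      calc ‖∑ i, c i • x i‖ ≤ σmax * Real.sqrt (∑ i, c i ^ 2) := hσ c
      _ ≤ σmax * (H₀ * lam * (σmax * ‖Δ‖)) := by
          apply mul_le_mul_of_nonneg_left _ hσpos.le
          calc Real.sqrt (∑ i, c i ^ 2) ≤ H₀ * lam * Real.sqrt (∑ i, b i ^ 2) := hsqrt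
          _ ≤ H₀ * lam * (σmax * ‖Δ‖) := by
              apply mul_le_mul_of_nonneg_left hbound (by positivity)
    have hinner2 : ⟪Δ, ∑ i, c i • x i⟫ ≤ ‖Δ‖ * (σmax * (H₀ * lam * (σmax * ‖Δ‖))) := by
      calc ⟪Δ, ∑ i, c i • x i⟫ ≤ ‖Δ‖ * ‖∑ i, c i • x i‖ := real_inner_le_norm _ _
      _ ≤ ‖Δ‖ * (σmax * (H₀ * lam * (σmax * ‖Δ‖))) :=
          mul_le_mul_of_nonneg_left hnorm (norm_nonneg _)
    rw [hdiff0, hcb]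
    have hNinv : (0:ℝ) < 1 / (N:ℝ) := by positivity
    calc (1/(N:ℝ)) * ⟪Δ, ∑ i, c i • x i⟫
        ≤ (1/(N:ℝ)) * (‖Δ‖ * (σmax * (H₀ * lam * (σmax * ‖Δ‖)))) :=
          mul_le_mul_of_nonneg_left hinner2 hNinv.le
    _ = K * lam * ‖Δ‖ ^ 2 := by rw [hK]; field_simp
  rcases eq_or_lt_of_le hr0 with hr | hrpos
  · subst hr
    simp
  set ψ : ℝ → ℝ := fun lam => f lam - f 0 - lam * f' 0 - (K/2) * lam ^ 2 * ‖Δ‖ ^ 2 with hψ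
  have hψd : ∀ lam : ℝ, HasDerivAt ψ (f' lam - f' 0 - K * lam * ‖Δ‖ ^ 2) lam := by
    intro lam
    have h1 : HasDerivAt (fun l : ℝ => l * f' 0) (f' 0) lam := by
      simpa using (hasDerivAt_id lam).mul_const (f' 0)
    have h2 : HasDerivAt (fun l : ℝ => (K/2) * l ^ 2 * ‖Δ‖ ^ 2) (K * lam * ‖Δ‖ ^ 2) lam := by
      have h3 := ((hasDerivAt_pow 2 lam).const_mul (K/2)).mul_const (‖Δ‖ ^ 2)
      exact h3.congr_deriv (by push_cast; ring)
    exact (((hfd lam).sub_const (f 0)).sub h1).sub h2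
  have hanti : AntitoneOn ψ (Set.Icc 0 r) := by
    apply antitoneOn_of_deriv_nonpos (convex_Icc 0 r)
    · exact fun lam _ => (hψd lam).continuousAt.continuousWithinAt
    · exact fun lam _ => (hψd lam).differentiableAt.differentiableWithinAt
    · intro lam hlam
      rw [interior_Icc] at hlam
      rw [(hψd lam).deriv]
      have := hlip lam ⟨hlam.1.le, hlam.2.le⟩
      linarith
  have hψr := hanti (Set.left_mem_Icc.mpr hr0) (Set.right_mem_Icc.mpr hr0) hr0
  have hψ0 : ψ 0 = 0 := by simp [hψ]
  rw [hψ0] at hψr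
  have hhalf : σmax ^ 2 * H₀ / (2 * (N:ℝ)) = K / 2 := by rw [hK]; ring
  rw [hhalf]
  simp only [hψ, hf, hf', ha, hb] at hψr
  simp only [zero_mul, add_zero, zero_pow, mul_zero, zero_sub, sub_zero] at hψr
  linarith [hψr]
theorem stmt2
    {d N : ℕ} (hN : 1 ≤ N)
    (x : Fin N → EuclideanSpace ℝ (Fin d))
    (ℓ ℓ' : ℝ → ℝ)
    (hdiff : ∀ s : ℝ, HasDerivAt ℓ (ℓ' s) s)
    (L : EuclideanSpace ℝ (Fin d) → ℝ)
    (hLdef : ∀ w : EuclideanSpace ℝ (Fin d), L w = (1 / (N : ℝ)) * ∑ i, ℓ ⟪w, x i⟫)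
    (gradL : EuclideanSpace ℝ (Fin d) → EuclideanSpace ℝ (Fin d))
    (hgraddef : ∀ w : EuclideanSpace ℝ (Fin d),
      gradL w = (1 / (N : ℝ)) • ∑ i, ℓ' ⟪w, x i⟫ • x i)
    (hsep : ∃ u : EuclideanSpace ℝ (Fin d), ∀ i, 0 < ⟪u, x i⟫)
    (σmax : ℝ) (hσpos : 0 < σmax)
    (hσ : ∀ c : Fin N → ℝ, ‖∑ i, c i • x i‖ ≤ σmax * Real.sqrt (∑ i, (c i) ^ 2))
    (hℓpos : ∀ s : ℝ, 0 < ℓ s) (hℓ'neg : ∀ s : ℝ, ℓ' s < 0)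
    (hℓtop : Tendsto ℓ atTop (𝓝 0))
    (hℓ'top : Tendsto ℓ' atTop (𝓝 0))
    (hℓ'bot : Filter.limsup ℓ' atBot < 0)
    (μp μm xp xm : ℝ) (hμp : 0 < μp) (hμm : 0 < μm)
    (htailp : ∀ s : ℝ, xp < s → -ℓ' s ≤ (1 + Real.exp (-μp * s)) * Real.exp (-s))
    (htailm : ∀ s : ℝ, xm < s → (1 - Real.exp (-μm * s)) * Real.exp (-s) ≤ -ℓ' s)
    (hloc : ∀ s : ℝ, ∃ H : ℝ, 0 < H ∧
      ∀ a b : ℝ, s ≤ a → s ≤ b → |ℓ' a - ℓ' b| ≤ H * |a - b|)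
    (η β : ℝ) (hη : 0 < η) (hβ0 : 0 ≤ β) (hβ1 : β < 1)
    (w m : ℕ → EuclideanSpace ℝ (Fin d))
    (hm0 : m 0 = 0) (hw0 : w 0 = w 1)
    (hmrec : ∀ t : ℕ, 1 ≤ t → m t = β • m (t - 1) + (1 - β) • gradL (w t))
    (hwrec : ∀ t : ℕ, 1 ≤ t → w (t + 1) = w t - η • m t)
    (s₀ H₀ : ℝ) (hs₀ : ℓ s₀ = N * L (w 1)) (hH₀pos : 0 < H₀)
    (hH₀ : ∀ a b : ℝ, s₀ ≤ a → s₀ ≤ b → |ℓ' a - ℓ' b| ≤ H₀ * |a - b|)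
    (hηlt : η < 2 * N / (σmax ^ 2 * H₀))
    :
    ∀ t : ℕ, 1 ≤ t →
      L (w (t + 1)) + (β / (2 * η * (1 - β))) * ‖w (t + 1) - w t‖ ^ 2 +
          ((1 - σmax ^ 2 * H₀ * η / (2 * N)) / η) * ‖w (t + 1) - w t‖ ^ 2 ≤
        L (w t) + (β / (2 * η * (1 - β))) * ‖w t - w (t - 1)‖ ^ 2 := by
  have hn : (0:ℝ) < N := by exact_mod_cast Nat.lt_of_lt_of_le Nat.zero_lt_one hN
  have h1β : (0:ℝ) < 1 - β := by linarith
  have h2e : (0:ℝ) < 2 * (η * (1 - β)) := by positivity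
  set K : ℝ := σmax ^ 2 * H₀ / N with hKdef
  have hKpos : 0 < K := by positivity
  have hC1 : η * K < 2 := by
    have h2 : (0:ℝ) < σmax ^ 2 * H₀ := by positivity
    have h3 := (lt_div_iff₀ h2).mp hηlt
    rw [hKdef]
    rw [mul_div_assoc']
    rw [div_lt_iff₀ hn]
    linarith
  have hderiv : ∀ s, deriv ℓ s = ℓ' s := fun s => (hdiff s).deriv
  have hanti : StrictAnti ℓ := strictAnti_of_deriv_neg fun s => by
    rw [hderiv]; exact hℓ'neg s
  have hle_of : ∀ u v : ℝ, ℓ u ≤ ℓ v → v ≤ u := by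
    intro u v h
    by_contra hc
    push_neg at hc
    exact absurd h (not_le.mpr (hanti hc))
  set C : ℝ := β / (2 * η * (1 - β)) with hCdef
  have hC0 : 0 ≤ C := by positivity
  have hCe : C * (2 * (η * (1 - β))) = β := by
    rw [hCdef, div_mul_eq_mul_div, div_eq_iff (by positivity : (2*η*(1-β)) ≠ 0)]; ring
  have hKhalf : σmax ^ 2 * H₀ / (2 * (N:ℝ)) = K / 2 := by rw [hKdef]; ring
  have hC2e : ((1 - σmax ^ 2 * H₀ * η / (2 * N)) / η) * η = 1 - η * K / 2 := by
    rw [hKdef]; field_simp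
  have hc2 : 0 ≤ (1 - σmax ^ 2 * H₀ * η / (2 * N)) / η := by
    apply div_nonneg _ hη.le
    have h4 : σmax ^ 2 * H₀ * η / (2 * N) = η * K / 2 := by rw [hKdef]; field_simp
    rw [h4]; linarith
  have hinner : ∀ u v : EuclideanSpace ℝ (Fin d),
      ⟪gradL u, v⟫ = (1/(N:ℝ)) * ∑ i, ℓ' ⟪u, x i⟫ * ⟪v, x i⟫ := by
    intro u v
    rw [hgraddef, real_inner_smul_left, sum_inner]
    congr 1
    exact Finset.sum_congr rfl fun i _ => by rw [real_inner_smul_left, real_inner_comm (x i) v]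
  have hLsum : ∀ v : EuclideanSpace ℝ (Fin d), (N:ℝ) * L v = ∑ i, ℓ ⟪v, x i⟫ := by
    intro v; rw [hLdef]; field_simp
  have hstep : ∀ t : ℕ, 1 ≤ t →
      L (w t) + C * ‖w t - w (t - 1)‖ ^ 2 ≤ L (w 1) →
      L (w (t + 1)) + C * ‖w (t + 1) - w t‖ ^ 2 +
        ((1 - σmax ^ 2 * H₀ * η / (2 * N)) / η) * ‖w (t + 1) - w t‖ ^ 2 ≤
      L (w t) + C * ‖w t - w (t - 1)‖ ^ 2 := by
    intro t ht hP
    have hΔm : w (t + 1) - w t = -(η • m t) := by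
      rw [hwrec t ht]; abel
    have hDm : w t - w (t - 1) = -(η • m (t - 1)) := by
      rcases Nat.exists_eq_add_of_le ht with ⟨k, hk⟩
      cases k with
      | zero =>
        subst hk
        simp [hw0, hm0]
      | succ j =>
        subst hk
        have e1 : 1 + (j + 1) = (j + 1) + 1 := by omega
        rw [e1, Nat.add_sub_cancel, hwrec (j + 1) (by omega)]
        abel
    obtain ⟨W, hWdef⟩ : ∃ W, W = w t := ⟨_, rfl⟩
    obtain ⟨Δ, hΔdef⟩ : ∃ Δ, Δ = w (t + 1) - w t := ⟨_, rfl⟩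
    obtain ⟨D, hDdef⟩ : ∃ D, D = w t - w (t - 1) := ⟨_, rfl⟩
    rw [← hΔdef, ← hDdef, ← hWdef]
    rw [← hDdef, ← hWdef] at hP
    rw [← hΔdef] at hΔm
    rw [← hDdef] at hDm
    by_cases hΔ0 : Δ = 0
    · have hww : w (t + 1) = W := by
        rw [hWdef]
        exact sub_eq_zero.mp (hΔdef.symm.trans hΔ0)
      rw [hΔ0, hww]
      simp only [norm_zero]
      linarith only [mul_nonneg hC0 (sq_nonneg ‖D‖)]
    have hSpos : 0 < ‖Δ‖ ^ 2 := pow_pos (norm_pos_iff.mpr hΔ0) 2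
    have hvec : (η * (1 - β)) • gradL W = β • D - Δ := by
      have h5 : (1 - β) • gradL (w t) = m t - β • m (t - 1) := by
        rw [hmrec t ht]; abel
      rw [hWdef, mul_smul, h5, hΔm, hDm]
      simp only [smul_sub, smul_neg, smul_smul, mul_comm β η]
      abel
    have hkey : η * (1 - β) * ⟪gradL W, Δ⟫ = β * ⟪D, Δ⟫ - ‖Δ‖ ^ 2 := by
      have h : ⟪(η * (1 - β)) • gradL W, Δ⟫ = ⟪β • D - Δ, Δ⟫ := by rw [hvec]
      rw [real_inner_smul_left, inner_sub_left, real_inner_smul_left,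
        real_inner_self_eq_norm_sq] at h
      exact h
    have hPin : ⟪D, Δ⟫ ≤ (‖D‖ ^ 2 + ‖Δ‖ ^ 2) / 2 := by
      linarith only [real_inner_le_norm D Δ, sq_nonneg (‖D‖ - ‖Δ‖)]
    have haff : ∀ (lam : ℝ) (i : Fin N), ⟪W + lam • Δ, x i⟫ = ⟪W, x i⟫ + lam * ⟪Δ, x i⟫ := by
      intro lam i; rw [inner_add_left, real_inner_smul_left]
    have h0A : ∀ i, s₀ ≤ ⟪W, x i⟫ := by
      intro i
      have h1 : ℓ ⟪W, x i⟫ ≤ (N:ℝ) * L W := by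
        rw [hLsum]
        exact Finset.single_le_sum (f := fun j => ℓ ⟪W, x j⟫)
          (fun j _ => (hℓpos _).le) (Finset.mem_univ i)
      have h3 : L W ≤ L (w 1) := by linarith only [hP, mul_nonneg hC0 (sq_nonneg ‖D‖)]
      have h2 : (N:ℝ) * L W ≤ (N:ℝ) * L (w 1) := mul_le_mul_of_nonneg_left h3 hn.le
      exact hle_of _ _ (by rw [hs₀]; linarith)
    set A : Set ℝ := {lam : ℝ | lam ∈ Set.Icc (0:ℝ) 1 ∧ ∀ i, s₀ ≤ ⟪W, x i⟫ + lam * ⟪Δ, x i⟫}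
      with hAdef
    have h0mem : (0:ℝ) ∈ A := by
      rw [hAdef]
      exact ⟨⟨le_refl 0, zero_le_one⟩, fun i => by simpa using h0A i⟩
    have hAsub : A ⊆ Set.Icc (0:ℝ) 1 := by rw [hAdef]; exact fun lam hl => hl.1
    have hAbdd : BddAbove A := BddAbove.mono hAsub bddAbove_Icc
    have hAclosed : IsClosed A := by
      have h6 : A = Set.Icc (0:ℝ) 1 ∩ ⋂ i, {lam : ℝ | s₀ ≤ ⟪W, x i⟫ + lam * ⟪Δ, x i⟫} := by
        rw [hAdef]; ext lam; simp [Set.mem_iInter]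
      rw [h6]
      exact isClosed_Icc.inter (isClosed_iInter fun i =>
        isClosed_le continuous_const (continuous_const.add (continuous_id.mul continuous_const)))
    set lamb : ℝ := sSup A with hlambdef
    have hlambA : lamb ∈ A := by
      rw [hlambdef]; exact hAclosed.csSup_mem ⟨0, h0mem⟩ hAbdd
    have hlamb2 : ∀ i, s₀ ≤ ⟪W, x i⟫ + lamb * ⟪Δ, x i⟫ := by
      have h7 := hlambA; rw [hAdef] at h7; exact h7.2
    have hl0 : 0 ≤ lamb := by rw [hlambdef]; exact le_csSup hAbdd h0mem
    have hl1 : lamb ≤ 1 := (hAsub hlambA).2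
    have hub : ∀ a ∈ A, a ≤ lamb := by
      intro a ha; rw [hlambdef]; exact le_csSup hAbdd ha
    have hsegl : ∀ lam ∈ Set.Icc (0:ℝ) lamb, ∀ i, s₀ ≤ ⟪W, x i⟫ + lam * ⟪Δ, x i⟫ := by
      rintro lam ⟨hla, hlb⟩ i
      rcases le_or_gt 0 ⟪Δ, x i⟫ with hbp | hbn
      · linarith only [h0A i, mul_nonneg hla hbp]
      · linarith only [hlamb2 i, mul_le_mul_of_nonpos_right hlb hbn.le]
    have hpush : lamb < 1 →
        (∀ i, s₀ < ⟪W, x i⟫ + lamb * ⟪Δ, x i⟫) → False := by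
      intro h1 hstrict
      have hev : ∀ᶠ lam in 𝓝 lamb, (∀ i, s₀ ≤ ⟪W, x i⟫ + lam * ⟪Δ, x i⟫) ∧ lam < 1 := by
        apply Filter.Eventually.and
        · rw [eventually_all]
          intro i
          have hopen : IsOpen {lam : ℝ | s₀ < ⟪W, x i⟫ + lam * ⟪Δ, x i⟫} :=
            isOpen_lt continuous_const (continuous_const.add (continuous_id.mul continuous_const))
          exact Filter.eventually_of_mem (hopen.mem_nhds (hstrict i)) fun y hy => le_of_lt hy
        · exact Filter.eventually_of_mem (isOpen_Iio.mem_nhds h1) fun y hy => hy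
      have hself : ∀ᶠ lam in 𝓝[>] lamb, lam ∈ Set.Ioi lamb := eventually_mem_nhdsWithin
      have hev2 : ∀ᶠ lam in 𝓝[>] lamb, (∀ i, s₀ ≤ ⟪W, x i⟫ + lam * ⟪Δ, x i⟫) ∧ lam < 1 :=
        hev.filter_mono nhdsWithin_le_nhds
      obtain ⟨lam', hlam', hmem⟩ := (hev2.and hself).exists
      have hmemA : lam' ∈ A := by
        rw [hAdef]
        exact ⟨⟨le_trans hl0 (le_of_lt hmem), le_of_lt hlam'.2⟩, hlam'.1⟩
      have hle := hub lam' hmemA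
      have hgt : lamb < lam' := hmem
      linarith
    have hLW : L W = (1/(N:ℝ)) * ∑ i, ℓ ⟪W, x i⟫ := by rw [hWdef, hLdef]
    have hGW : (1/(N:ℝ)) * ∑ i, ℓ' ⟪W, x i⟫ * ⟪Δ, x i⟫ = ⟪gradL W, Δ⟫ := (hinner W Δ).symm
    have hCD : C * ‖D‖ ^ 2 * (2 * (η * (1 - β))) = β * ‖D‖ ^ 2 := by
      calc C * ‖D‖ ^ 2 * (2 * (η * (1 - β)))
          = C * (2 * (η * (1 - β))) * ‖D‖ ^ 2 := by ring
      _ = β * ‖D‖ ^ 2 := by rw [hCe]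
    have hlam1 : lamb = 1 := by
      by_contra hne
      have hlt : lamb < 1 := lt_of_le_of_ne hl1 hne
      have hdesc := gdm_descent hN x ℓ ℓ' hdiff σmax hσpos hσ s₀ H₀ hH₀pos hH₀ W Δ lamb hl0 hsegl
      have hLWl : L (W + lamb • Δ) = (1/(N:ℝ)) * ∑ i, ℓ (⟪W, x i⟫ + lamb * ⟪Δ, x i⟫) := by
        rw [hLdef]
        congr 1
        exact Finset.sum_congr rfl fun i _ => by rw [haff]
      rw [← hLWl, ← hLW, hGW, hKhalf] at hdesc
      have hkeyl : η * (1 - β) * (lamb * ⟪gradL W, Δ⟫) = lamb * (β * ⟪D, Δ⟫ - ‖Δ‖ ^ 2) := by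
        calc η * (1 - β) * (lamb * ⟪gradL W, Δ⟫)
            = lamb * (η * (1 - β) * ⟪gradL W, Δ⟫) := by ring
        _ = lamb * (β * ⟪D, Δ⟫ - ‖Δ‖ ^ 2) := by rw [hkey]
      have hA' := mul_le_mul_of_nonneg_left hdesc h2e.le
      have hB' := mul_le_mul_of_nonneg_left hPin (mul_nonneg hl0 hβ0)
      have hPs := mul_le_mul_of_nonneg_left hP h2e.le
      have h1lam : 0 ≤ 1 - lamb := by linarith
      have hq1 : 0 ≤ (1 - lamb) * β * ‖D‖ ^ 2 :=
        mul_nonneg (mul_nonneg h1lam hβ0) (sq_nonneg _)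
      have hq2 : 0 ≤ (1 - lamb) * (lamb * ((η * (1 - β)) * K * ‖Δ‖ ^ 2)) :=
        mul_nonneg h1lam (mul_nonneg hl0 (by positivity))
      have hmid : 2 * (η * (1 - β)) * L (W + lamb • Δ)
          + lamb * ((2 - β) - η * (1 - β) * K) * ‖Δ‖ ^ 2
          ≤ 2 * (η * (1 - β)) * L (w 1) := by
        linarith only [hA', hkeyl, hB', hPs, hCD, hq1, hq2]
      rcases eq_or_lt_of_le hl0 with heq | hpos
      · -- lamb = 0
        by_cases hstrict : ∀ i, s₀ < ⟪W, x i⟫ + lamb * ⟪Δ, x i⟫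
        · exact hpush hlt hstrict
        · push_neg at hstrict
          obtain ⟨i, hi⟩ := hstrict
          have hai : ⟪W, x i⟫ = s₀ := by
            have h7 := h0A i
            have h8 : lamb = 0 := heq.symm
            rw [h8, zero_mul, add_zero] at hi
            linarith
          have hℓai : ℓ ⟪W, x i⟫ = ℓ s₀ := by rw [hai]
          have hsumW : ∑ j, ℓ ⟪W, x j⟫ = (N:ℝ) * L W := (hLsum W).symm
          have hile : ℓ ⟪W, x i⟫ ≤ ∑ j, ℓ ⟪W, x j⟫ :=
            Finset.single_le_sum (f := fun j => ℓ ⟪W, x j⟫)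
              (fun j _ => (hℓpos _).le) (Finset.mem_univ i)
          have h9 : (N:ℝ) * (L W + C * ‖D‖ ^ 2) ≤ (N:ℝ) * L (w 1) :=
            mul_le_mul_of_nonneg_left hP hn.le
          have h10 : 0 ≤ C * ‖D‖ ^ 2 := mul_nonneg hC0 (sq_nonneg _)
          have hNCD : (N:ℝ) * (C * ‖D‖ ^ 2) = 0 := by
            refine le_antisymm ?_ (mul_nonneg hn.le h10)
            linarith only [hs₀, hℓai, hile, hsumW, h9]
          have hCD0 : C * ‖D‖ ^ 2 = 0 := by
            rcases mul_eq_zero.mp hNCD with h | h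
            · exact absurd h hn.ne'
            · exact h
          have hN1 : N = 1 := by
            by_contra hN2
            have h2N : 2 ≤ N := by omega
            have hnontr : Nontrivial (Fin N) := Fin.nontrivial_iff_two_le.mpr h2N
            obtain ⟨j, hji⟩ : ∃ j : Fin N, j ≠ i := exists_ne i
            have hjle : ℓ ⟪W, x j⟫ ≤ ∑ k ∈ Finset.univ.erase i, ℓ ⟪W, x k⟫ :=
              Finset.single_le_sum (f := fun k => ℓ ⟪W, x k⟫)
                (fun k _ => (hℓpos _).le) (Finset.mem_erase.mpr ⟨hji, Finset.mem_univ j⟩)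
            have hsplit : ℓ ⟪W, x i⟫ + ∑ k ∈ Finset.univ.erase i, ℓ ⟪W, x k⟫
                = ∑ k, ℓ ⟪W, x k⟫ :=
              Finset.add_sum_erase _ (fun k => ℓ ⟪W, x k⟫) (Finset.mem_univ i)
            linarith only [hℓpos ⟪W, x j⟫, hjle, hsplit, hsumW, h9, hs₀, hℓai,
              mul_nonneg hn.le h10]
          have hβm : β • m (t - 1) = 0 := by
            have hβD : β * ‖D‖ ^ 2 = 0 := by
              have h11 := hCD
              rw [hCD0, zero_mul] at h11
              exact h11.symm
            rcases mul_eq_zero.mp hβD with hb0 | hD20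
            · rw [hb0, zero_smul]
            · have hD0 : D = 0 := norm_eq_zero.mp ((pow_eq_zero_iff two_ne_zero).mp hD20)
              have h12 : -(η • m (t - 1)) = (0 : EuclideanSpace ℝ (Fin d)) := by
                rw [← hDm, hD0]
              have h13 : η • m (t - 1) = (0 : EuclideanSpace ℝ (Fin d)) := neg_eq_zero.mp h12
              rcases smul_eq_zero.mp h13 with h | h
              · exact absurd h hη.ne'
              · rw [h, smul_zero]
          have hmt : m t = (1 - β) • gradL W := by
            rw [hmrec t ht, hβm, zero_add, hWdef]
          have hΔg : Δ = -((η * (1 - β)) • gradL W) := by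
            rw [hΔm, hmt, smul_smul]
          have hbi : ⟪Δ, x i⟫
              = -(η * (1 - β) * ((1/(N:ℝ)) * ∑ j, ℓ' ⟪W, x j⟫ * ⟪x i, x j⟫)) := by
            rw [hΔg, inner_neg_left, real_inner_smul_left, hinner W (x i)]
          have hxne : x i ≠ 0 := by
            obtain ⟨u, hu⟩ := hsep
            intro h0x
            have h14 := hu i
            rw [h0x, inner_zero_right] at h14
            exact lt_irrefl _ h14
          have hx2 : 0 < ‖x i‖ ^ 2 := pow_pos (norm_pos_iff.mpr hxne) 2
          subst hN1
          have huniq : ∀ j : Fin 1, j = i := fun j => Subsingleton.elim j i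
          have hsum1 : ∑ j, ℓ' ⟪W, x j⟫ * ⟪x i, x j⟫ = ℓ' s₀ * ‖x i‖ ^ 2 := by
            rw [Fin.sum_univ_one, huniq 0, hai, real_inner_self_eq_norm_sq]
          have hbpos : 0 < ⟪Δ, x i⟫ := by
            rw [hbi, hsum1]
            simp only [Nat.cast_one]
            linarith only [mul_pos (mul_pos hη h1β) (mul_pos (neg_pos.mpr (hℓ'neg s₀)) hx2)]
          have h1A : (1:ℝ) ∈ A := by
            rw [hAdef]
            refine ⟨⟨zero_le_one, le_refl 1⟩, fun j => ?_⟩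
            rw [huniq j, hai]
            linarith only [hbpos]
          have h15 : (1:ℝ) ≤ lamb := hub 1 h1A
          linarith
      · -- 0 < lamb
        have hQpos : 0 < (2 - β) - η * (1 - β) * K := by
          linarith only [mul_lt_mul_of_pos_left hC1 h1β, hβ0]
        apply hpush hlt
        intro i
        have hstrictL : L (W + lamb • Δ) < L (w 1) := by
          have h15 : 0 < lamb * ((2 - β) - η * (1 - β) * K) * ‖Δ‖ ^ 2 :=
            mul_pos (mul_pos hpos hQpos) hSpos
          have h20 : 2 * (η * (1 - β)) * L (W + lamb • Δ)
              < 2 * (η * (1 - β)) * L (w 1) := by linarith only [hmid, h15]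
          exact lt_of_mul_lt_mul_left h20 h2e.le
        have h16 : ℓ (⟪W, x i⟫ + lamb * ⟪Δ, x i⟫) ≤ (N:ℝ) * L (W + lamb • Δ) := by
          calc ℓ (⟪W, x i⟫ + lamb * ⟪Δ, x i⟫) = ℓ ⟪W + lamb • Δ, x i⟫ := by rw [haff]
          _ ≤ ∑ j, ℓ ⟪W + lamb • Δ, x j⟫ :=
              Finset.single_le_sum (f := fun j => ℓ ⟪W + lamb • Δ, x j⟫)
                (fun j _ => (hℓpos _).le) (Finset.mem_univ i)
          _ = (N:ℝ) * L (W + lamb • Δ) := (hLsum _).symm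
        have h17 : ℓ (⟪W, x i⟫ + lamb * ⟪Δ, x i⟫) < ℓ s₀ := by
          rw [hs₀]
          have h18 := mul_lt_mul_of_pos_left hstrictL hn
          linarith
        by_contra hc
        push_neg at hc
        have h19 := hanti.antitone hc
        linarith
    -- lamb = 1 : final descent and algebra
    have hseg1 : ∀ lam ∈ Set.Icc (0:ℝ) 1, ∀ i, s₀ ≤ ⟪W, x i⟫ + lam * ⟪Δ, x i⟫ := by
      rw [← hlam1]; exact hsegl
    have hdesc1 := gdm_descent hN x ℓ ℓ' hdiff σmax hσpos hσ s₀ H₀ hH₀pos hH₀ W Δ 1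
      zero_le_one hseg1
    have hwt1 : w (t + 1) = W + (1:ℝ) • Δ := by
      rw [one_smul, hΔdef, hWdef]
      abel
    have hLwt1 : L (w (t + 1)) = (1/(N:ℝ)) * ∑ i, ℓ (⟪W, x i⟫ + 1 * ⟪Δ, x i⟫) := by
      rw [hwt1, hLdef]
      congr 1
      exact Finset.sum_congr rfl fun i _ => by rw [haff]
    rw [← hLwt1, ← hLW, hGW, hKhalf] at hdesc1
    have hCS : C * ‖Δ‖ ^ 2 * (2 * (η * (1 - β))) = β * ‖Δ‖ ^ 2 := by
      calc C * ‖Δ‖ ^ 2 * (2 * (η * (1 - β)))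
          = C * (2 * (η * (1 - β))) * ‖Δ‖ ^ 2 := by ring
      _ = β * ‖Δ‖ ^ 2 := by rw [hCe]
    have hC2S : ((1 - σmax ^ 2 * H₀ * η / (2 * N)) / η) * ‖Δ‖ ^ 2 * (2 * (η * (1 - β)))
        = 2 * (1 - β) * ((1 - η * K / 2) * ‖Δ‖ ^ 2) := by
      calc ((1 - σmax ^ 2 * H₀ * η / (2 * N)) / η) * ‖Δ‖ ^ 2 * (2 * (η * (1 - β)))
          = (((1 - σmax ^ 2 * H₀ * η / (2 * N)) / η) * η) * (2 * (1 - β) * ‖Δ‖ ^ 2) := by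
            ring
      _ = 2 * (1 - β) * ((1 - η * K / 2) * ‖Δ‖ ^ 2) := by rw [hC2e]; ring
    have hscaled : 2 * (η * (1 - β)) *
        (L (w (t + 1)) + C * ‖Δ‖ ^ 2 + ((1 - σmax ^ 2 * H₀ * η / (2 * N)) / η) * ‖Δ‖ ^ 2)
        ≤ 2 * (η * (1 - β)) * (L W + C * ‖D‖ ^ 2) := by
      have hA1 := mul_le_mul_of_nonneg_left hdesc1 h2e.le
      have hB1 := mul_le_mul_of_nonneg_left hPin hβ0
      linarith only [hA1, hB1, hkey, hCS, hCD, hC2S]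
    exact le_of_mul_le_mul_left hscaled h2e
  have hinv : ∀ t : ℕ, 1 ≤ t → L (w t) + C * ‖w t - w (t - 1)‖ ^ 2 ≤ L (w 1) := by
    intro t ht
    induction t, ht using Nat.le_induction with
    | base => simp [hw0]
    | succ t ht ih =>
      have h := hstep t ht ih
      have hc3 : 0 ≤ ((1 - σmax ^ 2 * H₀ * η / (2 * N)) / η) * ‖w (t + 1) - w t‖ ^ 2 :=
        mul_nonneg hc2 (sq_nonneg _)
      simp only [Nat.add_sub_cancel]
      linarith only [h, ih, hc3]
  intro t ht
  exact hstep t ht (hinv t ht)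
end

section
/- Under the stated GDM conditions, the squared step sizes are summable: ∑_{t=1}^∞ ‖w(t+1) − w(t)‖² < ∞. Consequently, there exists C > 0 such that ‖w(t)‖ ≤ C·√t for all t ≥ 1. -/
open Filter Topology RealInnerProductSpace MeasureTheory

set_option linter.unusedVariables false
set_option maxHeartbeats 2000000

private lemma gdm_aux_mainE (β η Hs Q P τ D0 A Lt ψτ : ℝ)
    (hβ0 : 0 ≤ β) (h1β : 0 < 1-β) (hη : 0 < η) (hHs : 0 < Hs) (hηHs : η*Hs < 2)
    (hP0 : 0 ≤ P) (hQ0 : 0 ≤ Q) (h0 : 0 ≤ τ) (h1 : τ ≤ 1)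
    (hA' : (1-β)*A = η*β/2)
    (hD0le : (1-β)*D0 ≤ -η*Q + η*β*(P+Q)/2)
    (hT : ψτ ≤ Lt + τ*D0 + Hs*(η^2*Q)/2*τ^2) :
    ψτ ≤ Lt + A*P := by
  have hd := mul_le_mul_of_nonneg_left hD0le h0
  have hHsητ : Hs * η * τ ≤ 2 := by nlinarith
  have hq : (1-β) * (Hs * (η^2 * Q) / 2 * τ^2) ≤ (1-β) * (η * Q * τ) := by
    have hfac : 0 ≤ (1-β) * η * Q * τ / 2 := by positivity
    nlinarith [mul_le_mul_of_nonneg_left hHsητ hfac]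
  have hgoal : (1-β) * ψτ ≤ (1-β) * (Lt + A * P) := by
    have hAP : (1-β) * (A * P) = η * β * P / 2 := by
      rw [show (1-β) * (A*P) = ((1-β)*A)*P by ring, hA']; ring
    have hτβP : τ * (η*β*P/2) ≤ η*β*P/2 := by
      have h : 0 ≤ η*β*P/2 := by positivity
      nlinarith
    nlinarith [mul_le_mul_of_nonneg_left hT h1β.le, hd, hτβP, hq,
      mul_nonneg (mul_nonneg (mul_nonneg hη.le hβ0) hQ0) h0]
  exact le_of_mul_le_mul_left (by linarith) h1β

private lemma gdm_aux_mainS (β η Hs Q τ D0 L1 ψτ : ℝ)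
    (hβ0 : 0 ≤ β) (h1β : 0 < 1-β) (hη : 0 < η) (hHs : 0 < Hs) (hηHs : η*Hs < 2)
    (hQpos : 0 < Q) (h0 : 0 < τ) (h1 : τ ≤ 1)
    (hD0le : (1-β)*D0 ≤ -η*Q + η*β*(0+Q)/2)
    (hT : ψτ ≤ L1 + τ*D0 + Hs*(η^2*Q)/2*τ^2) :
    ψτ < L1 := by
  have hd := mul_le_mul_of_nonneg_left hD0le h0.le
  have hstrict : (1-β) * (τ * D0 + Hs * (η^2*Q)/2 * τ^2) < 0 := by
    have h2 : 0 < τ * η * Q := by positivity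
    have ha : (1-β)*Hs*η*τ/2 < 1 - β/2 := by
      have k1 : ((1-β)*Hs*η)*τ ≤ ((1-β)*Hs*η)*1 :=
        mul_le_mul_of_nonneg_left h1 (by positivity)
      have k2 : (1-β)*(η*Hs) < (1-β)*2 := mul_lt_mul_of_pos_left hηHs h1β
      nlinarith [hβ0]
    have hb := mul_lt_mul_of_pos_left ha h2
    nlinarith [hd, hb]
  have hfin : (1-β) * ψτ < (1-β) * L1 := by
    nlinarith [mul_le_mul_of_nonneg_left hT h1β.le]
  exact lt_of_mul_lt_mul_left (by linarith) h1β.le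

private lemma gdm_aux_step (β η Hs Q P D0 A γ Lt Lt1 : ℝ)
    (hβ0 : 0 ≤ β) (h1β : 0 < 1-β) (hη : 0 < η) (hHs : 0 < Hs) (hηHs : η*Hs < 2)
    (hP0 : 0 ≤ P) (hQ0 : 0 ≤ Q)
    (hA' : (1-β)*A = η*β/2) (hγ : γ = η * (1 - η * Hs / 2))
    (hD0le : (1-β)*D0 ≤ -η*Q + η*β*(P+Q)/2)
    (hT : Lt1 ≤ Lt + 1*D0 + Hs*(η^2*Q)/2*1^2) :
    Lt1 + A * Q ≤ Lt + A * P - γ * Q := by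
  have hgoal : (1-β) * (Lt1 + A * Q) ≤ (1-β) * (Lt + A * P - γ * Q) := by
    have hAP : (1-β) * (A * P) = η * β * P / 2 := by
      rw [show (1-β) * (A*P) = ((1-β)*A)*P by ring, hA']; ring
    have hAQ : (1-β) * (A * Q) = η * β * Q / 2 := by
      rw [show (1-β) * (A*Q) = ((1-β)*A)*Q by ring, hA']; ring
    have hγQ : (1-β) * (γ * Q) = (1-β) * (η*Q) - (1-β) * (η*Hs*η*Q/2) := by
      rw [hγ]; ring
    nlinarith [mul_le_mul_of_nonneg_left hT h1β.le, hD0le,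
      mul_nonneg (mul_nonneg hη.le hβ0) hQ0]
  exact le_of_mul_le_mul_left (by linarith) h1β

theorem stmt3
    {d N : ℕ} (hN : 1 ≤ N)
    (x : Fin N → EuclideanSpace ℝ (Fin d))
    (ℓ ℓ' : ℝ → ℝ)
    (hdiff : ∀ s : ℝ, HasDerivAt ℓ (ℓ' s) s)
    (L : EuclideanSpace ℝ (Fin d) → ℝ)
    (hLdef : ∀ w : EuclideanSpace ℝ (Fin d), L w = (1 / (N : ℝ)) * ∑ i, ℓ ⟪w, x i⟫)
    (gradL : EuclideanSpace ℝ (Fin d) → EuclideanSpace ℝ (Fin d))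
    (hgraddef : ∀ w : EuclideanSpace ℝ (Fin d),
      gradL w = (1 / (N : ℝ)) • ∑ i, ℓ' ⟪w, x i⟫ • x i)
    (hsep : ∃ u : EuclideanSpace ℝ (Fin d), ∀ i, 0 < ⟪u, x i⟫)
    (σmax : ℝ) (hσpos : 0 < σmax)
    (hσ : ∀ c : Fin N → ℝ, ‖∑ i, c i • x i‖ ≤ σmax * Real.sqrt (∑ i, (c i) ^ 2))
    (hℓpos : ∀ s : ℝ, 0 < ℓ s) (hℓ'neg : ∀ s : ℝ, ℓ' s < 0)
    (hℓtop : Tendsto ℓ atTop (𝓝 0))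
    (hℓ'top : Tendsto ℓ' atTop (𝓝 0))
    (hℓ'bot : Filter.limsup ℓ' atBot < 0)
    (μp μm xp xm : ℝ) (hμp : 0 < μp) (hμm : 0 < μm)
    (htailp : ∀ s : ℝ, xp < s → -ℓ' s ≤ (1 + Real.exp (-μp * s)) * Real.exp (-s))
    (htailm : ∀ s : ℝ, xm < s → (1 - Real.exp (-μm * s)) * Real.exp (-s) ≤ -ℓ' s)
    (hloc : ∀ s : ℝ, ∃ H : ℝ, 0 < H ∧
      ∀ a b : ℝ, s ≤ a → s ≤ b → |ℓ' a - ℓ' b| ≤ H * |a - b|)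
    (η β : ℝ) (hη : 0 < η) (hβ0 : 0 ≤ β) (hβ1 : β < 1)
    (w m : ℕ → EuclideanSpace ℝ (Fin d))
    (hm0 : m 0 = 0) (hw0 : w 0 = w 1)
    (hmrec : ∀ t : ℕ, 1 ≤ t → m t = β • m (t - 1) + (1 - β) • gradL (w t))
    (hwrec : ∀ t : ℕ, 1 ≤ t → w (t + 1) = w t - η • m t)
    (s₀ H₀ : ℝ) (hs₀ : ℓ s₀ = N * L (w 1)) (hH₀pos : 0 < H₀)
    (hH₀ : ∀ a b : ℝ, s₀ ≤ a → s₀ ≤ b → |ℓ' a - ℓ' b| ≤ H₀ * |a - b|)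
    (hηlt : η < 2 * N / (σmax ^ 2 * H₀))
    :
    Summable (fun t : ℕ => ‖w (t + 2) - w (t + 1)‖ ^ 2) ∧
    ∃ C : ℝ, 0 < C ∧ ∀ t : ℕ, 1 ≤ t → ‖w t‖ ≤ C * Real.sqrt t := by
  classical
  obtain ⟨u, hu⟩ := hsep
  have hNpos : (0:ℝ) < N := by exact_mod_cast hN
  have hNe : (N:ℝ) ≠ 0 := ne_of_gt hNpos
  have h1β : 0 < 1 - β := by linarith
  -- ℓ is strictly decreasing
  have hanti : StrictAnti ℓ := strictAnti_of_deriv_neg fun s => by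
    rw [(hdiff s).deriv]; exact hℓ'neg s
  have hLsum : ∀ v : EuclideanSpace ℝ (Fin d), (N:ℝ) * L v = ∑ i, ℓ ⟪v, x i⟫ := by
    intro v; rw [hLdef]; field_simp
  have hLnonneg : ∀ v : EuclideanSpace ℝ (Fin d), 0 ≤ L v := by
    intro v; rw [hLdef]
    exact mul_nonneg (by positivity) (Finset.sum_nonneg fun i _ => (hℓpos _).le)
  have hle_sum : ∀ (v : EuclideanSpace ℝ (Fin d)) i, ℓ ⟪v, x i⟫ ≤ (N:ℝ) * L v := by
    intro v i
    rw [hLsum]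
    exact Finset.single_le_sum (f := fun j => ℓ ⟪v, x j⟫) (fun j _ => (hℓpos _).le)
      (Finset.mem_univ i)
  have hmargin : ∀ v : EuclideanSpace ℝ (Fin d), L v ≤ L (w 1) → ∀ i, s₀ ≤ ⟪v, x i⟫ := by
    intro v hv i
    by_contra hcon
    push_neg at hcon
    have h1 : ℓ s₀ < ℓ ⟪v, x i⟫ := hanti hcon
    have h2 := hle_sum v i
    have h3 : (N:ℝ) * L v ≤ (N:ℝ) * L (w 1) := by
      exact mul_le_mul_of_nonneg_left hv hNpos.le
    rw [← hs₀] at h3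
    linarith
  -- adjoint bound
  have hadj : ∀ v : EuclideanSpace ℝ (Fin d), ∑ i, ⟪v, x i⟫^2 ≤ σmax^2 * ‖v‖^2 := by
    intro v
    have hS0 : 0 ≤ ∑ i, ⟪v, x i⟫^2 := Finset.sum_nonneg fun i _ => sq_nonneg _
    have h1 : ∑ i, ⟪v, x i⟫^2 = ⟪v, ∑ i, ⟪v, x i⟫ • x i⟫ := by
      rw [inner_sum]
      apply Finset.sum_congr rfl
      intro i _
      rw [real_inner_smul_right]; ring
    have h2 : ⟪v, ∑ i, ⟪v, x i⟫ • x i⟫ ≤ ‖v‖ * ‖∑ i, ⟪v, x i⟫ • x i‖ :=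
      real_inner_le_norm _ _
    have h3 := hσ (fun i => ⟪v, x i⟫)
    have h4 : ∑ i, ⟪v, x i⟫^2 ≤ ‖v‖ * (σmax * Real.sqrt (∑ i, ⟪v, x i⟫^2)) :=
      h1.le.trans (h2.trans (mul_le_mul_of_nonneg_left h3 (norm_nonneg v)))
    have h5 := Real.sq_sqrt hS0
    have h6 := Real.sqrt_nonneg (∑ i, ⟪v, x i⟫^2)
    nlinarith [sq_nonneg (Real.sqrt (∑ i, ⟪v, x i⟫^2) - σmax * ‖v‖), norm_nonneg v, hσpos]
  -- constants
  set Hs := σmax^2 * H₀ / N with hHsdef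
  have hHspos : 0 < Hs := by rw [hHsdef]; positivity
  have hηHs : η * Hs < 2 := by
    rw [lt_div_iff₀ (by positivity)] at hηlt
    rw [hHsdef]
    rw [show η * (σmax^2 * H₀ / (N:ℝ)) = η * (σmax^2 * H₀) / N by ring, div_lt_iff₀ hNpos]
    linarith
  set γ := η * (1 - η * Hs / 2) with hγdef
  have hγpos : 0 < γ := by
    rw [hγdef]; exact mul_pos hη (by linarith)
  set A := η * β / (2 * (1 - β)) with hAdef
  have hA0 : 0 ≤ A := by
    rw [hAdef]; exact div_nonneg (mul_nonneg hη.le hβ0) (by linarith)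
  have hA' : (1-β) * A = η * β / 2 := by
    rw [hAdef]; field_simp
  clear_value Hs γ A
  -- m 1 ≠ 0
  have hm1eq : m 1 = (1 - β) • gradL (w 1) := by
    have h := hmrec 1 le_rfl
    simpa [hm0] using h
  have hgradu : ∀ v : EuclideanSpace ℝ (Fin d), ⟪u, gradL v⟫ < 0 := by
    intro v
    rw [hgraddef, real_inner_smul_right, inner_sum]
    have hne : (Finset.univ : Finset (Fin N)).Nonempty := ⟨⟨0, hN⟩, Finset.mem_univ _⟩
    have hsumneg : ∑ i, ⟪u, ℓ' ⟪v, x i⟫ • x i⟫ < 0 := by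
      apply Finset.sum_neg ?_ hne
      intro i _
      rw [real_inner_smul_right]
      exact mul_neg_of_neg_of_pos (hℓ'neg _) (hu i)
    exact mul_neg_of_pos_of_neg (by positivity) hsumneg
  have hm1pos : 0 < ‖m 1‖^2 := by
    have hip : ⟪u, m 1⟫ < 0 := by
      rw [hm1eq, real_inner_smul_right]
      exact mul_neg_of_pos_of_neg h1β (hgradu _)
    have hne : m 1 ≠ 0 := by
      intro h; rw [h, inner_zero_right] at hip; exact lt_irrefl 0 hip
    have := norm_pos_iff.mpr hne
    positivity
  -- ============ the key one-step lemma ============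
  have key : ∀ t : ℕ, 1 ≤ t →
      (∀ i, s₀ ≤ ⟪w t, x i⟫) →
      L (w t) + A * ‖m (t-1)‖^2 ≤ L (w 1) →
      (2 ≤ t → L (w t) + A * ‖m (t-1)‖^2 < L (w 1)) →
      (∀ i, s₀ ≤ ⟪w (t+1), x i⟫) ∧
        L (w (t+1)) + A * ‖m t‖^2 ≤ L (w t) + A * ‖m (t-1)‖^2 - γ * ‖m t‖^2 := by
    intro t ht1 hmarg hEle hElt
    set Δ : EuclideanSpace ℝ (Fin d) := -(η • m t) with hΔdef
    have hwt1 : w (t+1) = w t + Δ := by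
      rw [hwrec t ht1, hΔdef, sub_eq_add_neg]
    clear_value Δ
    obtain ⟨P, hPdef⟩ : ∃ P : ℝ, P = ‖m (t-1)‖^2 := ⟨_, rfl⟩
    obtain ⟨Q, hQdef⟩ : ∃ Q : ℝ, Q = ‖m t‖^2 := ⟨_, rfl⟩
    rw [← hPdef, ← hQdef]
    rw [← hPdef] at hEle hElt
    have hP0 : 0 ≤ P := by rw [hPdef]; positivity
    have hQ0 : 0 ≤ Q := by rw [hQdef]; positivity
    have hΔQ : ‖Δ‖^2 = η^2 * Q := by
      rw [hΔdef, hQdef, norm_neg, norm_smul, Real.norm_eq_abs, abs_of_pos hη, mul_pow]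
    set ψ : ℝ → ℝ := fun τ => (1/(N:ℝ)) * ∑ i, ℓ (⟪w t, x i⟫ + τ * ⟪Δ, x i⟫) with hψdef
    clear_value ψ
    have hψL : ∀ τ : ℝ, ψ τ = L (w t + τ • Δ) := by
      intro τ
      simp only [hψdef, hLdef]
      congr 1
      apply Finset.sum_congr rfl
      intro i _
      rw [inner_add_left, real_inner_smul_left]
    have hψ0 : ψ 0 = L (w t) := by
      have := hψL 0; simpa using this
    have hψ1 : ψ 1 = L (w (t+1)) := by
      rw [hψL 1, hwt1, one_smul]
    set D : ℝ → ℝ := fun τ => (1/(N:ℝ)) * ∑ i, ℓ' (⟪w t, x i⟫ + τ * ⟪Δ, x i⟫) * ⟪Δ, x i⟫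
      with hDdef
    clear_value D
    have hderiv : ∀ τ : ℝ, HasDerivAt ψ (D τ) τ := by
      intro τ
      simp only [hψdef, hDdef]
      have h1 : ∀ i ∈ Finset.univ, HasDerivAt
          (fun τ : ℝ => ℓ (⟪w t, x i⟫ + τ * ⟪Δ, x i⟫))
          (ℓ' (⟪w t, x i⟫ + τ * ⟪Δ, x i⟫) * ⟪Δ, x i⟫) τ := by
        intro i _
        have haff : HasDerivAt (fun τ : ℝ => ⟪w t, x i⟫ + τ * ⟪Δ, x i⟫) ⟪Δ, x i⟫ τ := by
          simpa using ((hasDerivAt_id τ).mul_const ⟪Δ, x i⟫).const_add ⟪w t, x i⟫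
        exact (hdiff _).comp τ haff
      exact (HasDerivAt.fun_sum h1).const_mul _
    -- relation of D 0 to momentum
    have hgw : (1-β) • gradL (w t) = m t - β • m (t-1) := by
      rw [hmrec t ht1]; abel
    have hD0g : D 0 = ⟪gradL (w t), Δ⟫ := by
      rw [hgraddef, real_inner_smul_left, sum_inner, hDdef]
      simp only [zero_mul, add_zero]
      rw [Finset.mul_sum, Finset.mul_sum]
      apply Finset.sum_congr rfl
      intro i _
      rw [real_inner_smul_left, real_inner_comm (x i) Δ]
    have hD0m : (1-β) * D 0 = -η * (Q - β * ⟪m (t-1), m t⟫) := by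
      have h1 : D 0 = -η * ⟪gradL (w t), m t⟫ := by
        rw [hD0g, hΔdef, inner_neg_right, real_inner_smul_right]; ring
      have h2 : (1-β) * ⟪gradL (w t), m t⟫ = Q - β * ⟪m (t-1), m t⟫ := by
        have h3 : ⟪(1-β) • gradL (w t), m t⟫ = ⟪m t - β • m (t-1), m t⟫ := by rw [hgw]
        rw [real_inner_smul_left, inner_sub_left, real_inner_smul_left,
          real_inner_self_eq_norm_sq] at h3
        rw [h3, hQdef]
      calc (1-β) * D 0 = -η * ((1-β) * ⟪gradL (w t), m t⟫) := by rw [h1]; ring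
        _ = -η * (Q - β * ⟪m (t-1), m t⟫) := by rw [h2]
    have hip : ⟪m (t-1), m t⟫ ≤ (P + Q)/2 := by
      have h := real_inner_le_norm (m (t-1)) (m t)
      rw [hPdef, hQdef]
      nlinarith [sq_nonneg (‖m (t-1)‖ - ‖m t‖)]
    have hD0le : (1-β) * D 0 ≤ -η*Q + η*β*(P+Q)/2 := by
      rw [hD0m]
      have := mul_le_mul_of_nonneg_left hip (mul_nonneg hη.le hβ0)
      nlinarith
    -- intermediate margins
    have hmid : ∀ τ : ℝ, 0 ≤ τ → (∀ i, s₀ ≤ ⟪w t, x i⟫ + τ * ⟪Δ, x i⟫) →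
        ∀ σ, 0 ≤ σ → σ ≤ τ → ∀ i, s₀ ≤ ⟪w t, x i⟫ + σ * ⟪Δ, x i⟫ := by
      intro τ hτ0 hmargτ σ hσ0 hστ i
      have h1 := hmarg i
      have h2 := hmargτ i
      rcases eq_or_lt_of_le (le_trans hσ0 hστ) with h | h
      · have hσ' : σ = 0 := le_antisymm (h ▸ hστ) hσ0
        simpa [hσ'] using h1
      · nlinarith [mul_nonneg (sub_nonneg.2 hστ) (sub_nonneg.2 h1),
          mul_nonneg hσ0 (sub_nonneg.2 h2)]
    -- Taylor inequality
    have hTaylor : ∀ τ : ℝ, 0 ≤ τ → (∀ i, s₀ ≤ ⟪w t, x i⟫ + τ * ⟪Δ, x i⟫) →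
        ψ τ ≤ ψ 0 + τ * D 0 + (Hs * ‖Δ‖^2 / 2) * τ^2 := by
      intro τ hτ0 hmargτ
      obtain ⟨K, hKdef⟩ : ∃ K : ℝ, K = Hs * ‖Δ‖^2 := ⟨_, rfl⟩
      rw [show Hs * ‖Δ‖^2 / 2 * τ^2 = K/2 * τ^2 by rw [hKdef]]
      have hK0 : 0 ≤ K := by rw [hKdef]; positivity
      have hb2 : ∑ i, ⟪Δ, x i⟫^2 ≤ σmax^2 * ‖Δ‖^2 := hadj Δ
      have hDbound : ∀ σ : ℝ, 0 ≤ σ → σ ≤ τ → D σ - D 0 ≤ K * σ := by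
        intro σ hσ0 hστ
        have hmargσ := hmid τ hτ0 hmargτ σ hσ0 hστ
        have hterm : ∀ i ∈ Finset.univ,
            ℓ' (⟪w t, x i⟫ + σ * ⟪Δ, x i⟫) * ⟪Δ, x i⟫ - ℓ' (⟪w t, x i⟫) * ⟪Δ, x i⟫
              ≤ H₀ * σ * ⟪Δ, x i⟫^2 := by
          intro i _
          have h := hH₀ (⟪w t, x i⟫ + σ * ⟪Δ, x i⟫) (⟪w t, x i⟫) (hmargσ i) (hmarg i)
          have habs : |⟪w t, x i⟫ + σ * ⟪Δ, x i⟫ - ⟪w t, x i⟫| = σ * |⟪Δ, x i⟫| := by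
            rw [add_sub_cancel_left, abs_mul, abs_of_nonneg hσ0]
          rw [habs] at h
          calc ℓ' (⟪w t, x i⟫ + σ * ⟪Δ, x i⟫) * ⟪Δ, x i⟫ - ℓ' (⟪w t, x i⟫) * ⟪Δ, x i⟫
              = (ℓ' (⟪w t, x i⟫ + σ * ⟪Δ, x i⟫) - ℓ' (⟪w t, x i⟫)) * ⟪Δ, x i⟫ := by ring
            _ ≤ |(ℓ' (⟪w t, x i⟫ + σ * ⟪Δ, x i⟫) - ℓ' (⟪w t, x i⟫)) * ⟪Δ, x i⟫| := le_abs_self _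
            _ = |ℓ' (⟪w t, x i⟫ + σ * ⟪Δ, x i⟫) - ℓ' (⟪w t, x i⟫)| * |⟪Δ, x i⟫| := abs_mul _ _
            _ ≤ (H₀ * (σ * |⟪Δ, x i⟫|)) * |⟪Δ, x i⟫| := by
                exact mul_le_mul_of_nonneg_right h (abs_nonneg _)
            _ = H₀ * σ * ⟪Δ, x i⟫^2 := by
                rw [show H₀ * (σ * |⟪Δ, x i⟫|) * |⟪Δ, x i⟫|
                  = H₀ * σ * |⟪Δ, x i⟫|^2 by ring, sq_abs]
        have hsum := Finset.sum_le_sum hterm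
        have hstep : D σ - D 0 = (1/(N:ℝ)) * ∑ i,
            (ℓ' (⟪w t, x i⟫ + σ * ⟪Δ, x i⟫) * ⟪Δ, x i⟫ - ℓ' (⟪w t, x i⟫) * ⟪Δ, x i⟫) := by
          rw [hDdef]
          simp only [zero_mul, add_zero]
          rw [← mul_sub, ← Finset.sum_sub_distrib]
        rw [hstep]
        have hsum2 : ∑ i, (ℓ' (⟪w t, x i⟫ + σ * ⟪Δ, x i⟫) * ⟪Δ, x i⟫
            - ℓ' (⟪w t, x i⟫) * ⟪Δ, x i⟫) ≤ H₀ * σ * (σmax^2 * ‖Δ‖^2) := by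
          calc _ ≤ ∑ i, H₀ * σ * ⟪Δ, x i⟫^2 := hsum
            _ = H₀ * σ * ∑ i, ⟪Δ, x i⟫^2 := by rw [Finset.mul_sum]
            _ ≤ H₀ * σ * (σmax^2 * ‖Δ‖^2) := by
                exact mul_le_mul_of_nonneg_left hb2 (by positivity)
        calc (1/(N:ℝ)) * ∑ i, (ℓ' (⟪w t, x i⟫ + σ * ⟪Δ, x i⟫) * ⟪Δ, x i⟫
            - ℓ' (⟪w t, x i⟫) * ⟪Δ, x i⟫)
            ≤ (1/(N:ℝ)) * (H₀ * σ * (σmax^2 * ‖Δ‖^2)) := by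
              exact mul_le_mul_of_nonneg_left hsum2 (by positivity)
          _ = K * σ := by rw [hKdef, hHsdef]; field_simp
      -- antitone argument
      have hχ : ∀ σ : ℝ, HasDerivAt (fun σ => ψ σ - σ * D 0 - K/2 * σ^2)
          (D σ - D 0 - K * σ) σ := by
        intro σ
        have h2 : HasDerivAt (fun σ : ℝ => σ * D 0) (D 0) σ := by
          simpa using (hasDerivAt_id σ).mul_const (D 0)
        have h3 : HasDerivAt (fun σ : ℝ => K/2 * σ^2) (K * σ) σ := by
          have h4 := (hasDerivAt_pow 2 σ).const_mul (K/2)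
          have h5 : K/2 * (2 * σ^1) = K * σ := by ring
          rw [show ((2:ℕ):ℝ) * σ^(2-1) = 2 * σ^1 by norm_num] at h4
          rw [← h5]; exact h4
        exact ((hderiv σ).sub h2).sub h3
      have hanti' : AntitoneOn (fun σ => ψ σ - σ * D 0 - K/2 * σ^2) (Set.Icc 0 τ) := by
        apply antitoneOn_of_deriv_nonpos (convex_Icc 0 τ)
        · apply Continuous.continuousOn
          have : Differentiable ℝ (fun σ => ψ σ - σ * D 0 - K/2 * σ^2) :=
            fun σ => (hχ σ).differentiableAt
          exact this.continuous
        · intro σ hσ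
          exact (hχ σ).differentiableAt.differentiableWithinAt
        · intro σ hσ
          rw [(hχ σ).deriv]
          rw [interior_Icc] at hσ
          have := hDbound σ hσ.1.le hσ.2.le
          linarith
      have hfin := hanti' (Set.left_mem_Icc.2 hτ0) (Set.right_mem_Icc.2 hτ0) hτ0
      simp only at hfin
      nlinarith [hfin]
    -- main inequality: value below Lyapunov level for all feasible τ
    have hmainE : ∀ τ : ℝ, 0 ≤ τ → τ ≤ 1 → (∀ i, s₀ ≤ ⟪w t, x i⟫ + τ * ⟪Δ, x i⟫) →
        ψ τ ≤ L (w t) + A * P := by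
      intro τ h0 h1 hm'
      have hT := hTaylor τ h0 hm'
      rw [hψ0, hΔQ] at hT
      exact gdm_aux_mainE β η Hs Q P τ (D 0) A (L (w t)) (ψ τ) hβ0 h1β hη hHspos hηHs
        hP0 hQ0 h0 h1 hA' hD0le hT
    -- strict version for t = 1
    have hmainS : t = 1 → ∀ τ : ℝ, 0 < τ → τ ≤ 1 →
        (∀ i, s₀ ≤ ⟪w t, x i⟫ + τ * ⟪Δ, x i⟫) → ψ τ < L (w 1) := by
      intro ht τ hτ0 hτ1 hm'
      have hPz : P = 0 := by rw [hPdef, ht]; simp [hm0]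
      have hQpos : 0 < Q := by rw [hQdef, ht]; exact hm1pos
      have hT := hTaylor τ hτ0.le hm'
      rw [hψ0, hΔQ, ht] at hT
      have hD0le' := hD0le
      rw [hPz] at hD0le'
      exact gdm_aux_mainS β η Hs Q τ (D 0) (L (w 1)) (ψ τ) hβ0 h1β hη hHspos hηHs
        hQpos hτ0 hτ1 hD0le' hT
    -- the feasible set T
    set T : Set ℝ := {τ : ℝ | τ ∈ Set.Icc (0:ℝ) 1 ∧
      ∀ i, s₀ ≤ ⟪w t, x i⟫ + τ * ⟪Δ, x i⟫} with hTdef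
    have hT0 : (0:ℝ) ∈ T := by
      constructor
      · exact Set.left_mem_Icc.2 zero_le_one
      · intro i; simpa using hmarg i
    have hTbdd : BddAbove T := ⟨1, fun τ hτ => hτ.1.2⟩
    have hTclosed : IsClosed T := by
      have : T = Set.Icc (0:ℝ) 1 ∩ ⋂ i, {τ : ℝ | s₀ ≤ ⟪w t, x i⟫ + τ * ⟪Δ, x i⟫} := by
        ext τ
        simp [hTdef, Set.mem_iInter]
      rw [this]
      exact isClosed_Icc.inter (isClosed_iInter fun i =>
        isClosed_le continuous_const (continuous_const.add (continuous_id.mul continuous_const)))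
    have hTne : T.Nonempty := ⟨0, hT0⟩
    have hτsmem : sSup T ∈ T := hTclosed.csSup_mem hTne hTbdd
    have hone : (1:ℝ) ∈ T := by
      by_contra hcon
      have hτlt : sSup T < 1 := lt_of_le_of_ne hτsmem.1.2 (fun h => hcon (h ▸ hτsmem))
      set τs := sSup T with hτsdef
      -- show strict margins at τs
      have hstrictmarg : ∀ i, s₀ < ⟪w t, x i⟫ + τs * ⟪Δ, x i⟫ := by
        by_cases h2t : 2 ≤ t
        · -- ψ τs ≤ E t < L (w 1)
          intro i
          have hψle := hmainE τs hτsmem.1.1 hτsmem.1.2 hτsmem.2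
          have hψlt : ψ τs < L (w 1) := lt_of_le_of_lt hψle (hElt h2t)
          have hψL' : ψ τs = L (w t + τs • Δ) := hψL τs
          have hsingle : ℓ (⟪w t, x i⟫ + τs * ⟪Δ, x i⟫) ≤ (N:ℝ) * ψ τs := by
            rw [hψL']
            have : ⟪w t + τs • Δ, x i⟫ = ⟪w t, x i⟫ + τs * ⟪Δ, x i⟫ := by
              rw [inner_add_left, real_inner_smul_left]
            rw [← this]
            exact hle_sum _ i
          have hlt2 : (N:ℝ) * ψ τs < (N:ℝ) * L (w 1) :=
            mul_lt_mul_of_pos_left hψlt hNpos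
          rw [← hs₀] at hlt2
          have : ℓ (⟪w t, x i⟫ + τs * ⟪Δ, x i⟫) < ℓ s₀ := lt_of_le_of_lt hsingle hlt2
          by_contra hc
          push_neg at hc
          rcases eq_or_lt_of_le (hτsmem.2 i) with he | hl
          · rw [← he] at this; exact lt_irrefl _ this
          · exact absurd hl (not_lt.2 (by linarith))
        · -- t = 1
          have ht : t = 1 := by omega
          rcases eq_or_lt_of_le hτsmem.1.1 with hz | hpos
          · -- τs = 0 : margins at w 1; boundary case forces N = 1
            intro i
            by_contra hc
            push_neg at hc
            have hmi : ⟪w t, x i⟫ + τs * ⟪Δ, x i⟫ = s₀ :=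
              le_antisymm hc (hτsmem.2 i)
            rw [← hz, zero_mul, add_zero] at hmi
            -- then ℓ(margin_i) = ℓ s₀ = N L(w 1) so the rest of the sum is 0, so N = 1
            have hsum1 : ∑ j, ℓ ⟪w t, x j⟫ = ℓ s₀ := by
              rw [← hLsum (w t), ht, ← hs₀]
            have hrest : ∑ j ∈ Finset.univ.erase i, ℓ ⟪w t, x j⟫ = 0 := by
              have h := Finset.sum_erase_add Finset.univ (fun j => ℓ ⟪w t, x j⟫)
                (Finset.mem_univ i)
              rw [hsum1, hmi] at h
              linarith
            have hempty : (Finset.univ.erase i) = ∅ := by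
              by_contra hne
              obtain ⟨j, hj⟩ := Finset.nonempty_iff_ne_empty.2 hne
              have hpos' : 0 < ∑ j ∈ Finset.univ.erase i, ℓ ⟪w t, x j⟫ :=
                Finset.sum_pos (fun k _ => hℓpos _) ⟨j, hj⟩
              linarith
            -- all indices equal i; show margin moves the right way: b i ≥ 0
            have halli : ∀ j : Fin N, j = i := by
              intro j
              by_contra hji
              have : j ∈ Finset.univ.erase i := Finset.mem_erase.2 ⟨hji, Finset.mem_univ j⟩
              rw [hempty] at this
              exact absurd this (Finset.notMem_empty j)
            have hbi : 0 ≤ ⟪Δ, x i⟫ := by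
              have hg : gradL (w t) = (1/(N:ℝ)) • (ℓ' ⟪w t, x i⟫ • x i) := by
                rw [hgraddef]
                congr 1
                rw [Finset.sum_eq_single i (fun j _ hji => absurd (halli j) hji)
                  (fun h => absurd (Finset.mem_univ i) h)]
              have hmt : m t = (1-β) • gradL (w t) := by
                rw [ht]; exact hm1eq
              rw [hΔdef, hmt, hg]
              rw [inner_neg_left, real_inner_smul_left, real_inner_smul_left,
                real_inner_smul_left, real_inner_smul_left, real_inner_self_eq_norm_sq]
              have hl0 : ℓ' ⟪w t, x i⟫ ≤ 0 := (hℓ'neg _).le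
              have hn2 : 0 ≤ ‖x i‖^2 := by positivity
              have k1 : ℓ' ⟪w t, x i⟫ * ‖x i‖^2 ≤ 0 :=
                mul_nonpos_iff.2 (Or.inr ⟨hl0, hn2⟩)
              have k2 : 0 ≤ η * (1-β) * (1/(N:ℝ)) :=
                mul_nonneg (mul_nonneg hη.le h1β.le) (by positivity)
              nlinarith only [k1, k2]
            -- then 1 ∈ T, contradicting τs < 1
            have h1T : (1:ℝ) ∈ T := by
              constructor
              · exact Set.right_mem_Icc.2 zero_le_one
              · intro j
                rw [halli j, hmi, one_mul]
                linarith
            have := le_csSup hTbdd h1T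
            rw [← hτsdef] at this
            linarith
          · -- τs > 0, t = 1: strict decrease
            intro i
            have hψlt := hmainS ht τs hpos hτsmem.1.2 hτsmem.2
            have hsingle : ℓ (⟪w t, x i⟫ + τs * ⟪Δ, x i⟫) ≤ (N:ℝ) * ψ τs := by
              rw [hψL τs]
              have : ⟪w t + τs • Δ, x i⟫ = ⟪w t, x i⟫ + τs * ⟪Δ, x i⟫ := by
                rw [inner_add_left, real_inner_smul_left]
              rw [← this]
              exact hle_sum _ i
            have hlt2 : (N:ℝ) * ψ τs < (N:ℝ) * L (w 1) :=
              mul_lt_mul_of_pos_left hψlt hNpos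
            rw [← hs₀] at hlt2
            have hlt3 : ℓ (⟪w t, x i⟫ + τs * ⟪Δ, x i⟫) < ℓ s₀ := lt_of_le_of_lt hsingle hlt2
            rcases eq_or_lt_of_le (hτsmem.2 i) with he | hl
            · rw [← he] at hlt3; exact absurd hlt3 (lt_irrefl _)
            · exact hl
      -- extend beyond τs: contradiction with sup
      have hNne : (Finset.univ : Finset (Fin N)).Nonempty := ⟨⟨0, hN⟩, Finset.mem_univ _⟩
      set δ := Finset.univ.inf' hNne
        (fun i => (⟪w t, x i⟫ + τs * ⟪Δ, x i⟫ - s₀) / (|⟪Δ, x i⟫| + 1)) with hδdef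
      have hδpos : 0 < δ := by
        rw [hδdef, Finset.lt_inf'_iff]
        intro i _
        have hsm := hstrictmarg i
        have habs : (0:ℝ) < |⟪Δ, x i⟫| + 1 := by positivity
        exact div_pos (by linarith) habs
      set τ' := min 1 (τs + δ) with hτ'def
      have hτ'gt : τs < τ' := by
        rw [hτ'def]
        exact lt_min hτlt (by linarith)
      have hτ'mem : τ' ∈ T := by
        constructor
        · constructor
          · have : (0:ℝ) ≤ τs := hτsmem.1.1
            rw [hτ'def]; exact le_min zero_le_one (by linarith)
          · rw [hτ'def]; exact min_le_left _ _
        · intro i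
          have hδle : δ ≤ (⟪w t, x i⟫ + τs * ⟪Δ, x i⟫ - s₀) / (|⟪Δ, x i⟫| + 1) := by
            rw [hδdef]
            exact Finset.inf'_le _ (Finset.mem_univ i)
          have habs : (0:ℝ) < |⟪Δ, x i⟫| + 1 := by positivity
          have hδb : δ * (|⟪Δ, x i⟫| + 1) ≤ ⟪w t, x i⟫ + τs * ⟪Δ, x i⟫ - s₀ := by
            rw [div_eq_mul_inv] at hδle
            calc δ * (|⟪Δ, x i⟫| + 1)
                ≤ ((⟪w t, x i⟫ + τs * ⟪Δ, x i⟫ - s₀) * (|⟪Δ, x i⟫| + 1)⁻¹) * (|⟪Δ, x i⟫| + 1) :=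
                  mul_le_mul_of_nonneg_right hδle habs.le
              _ = ⟪w t, x i⟫ + τs * ⟪Δ, x i⟫ - s₀ := by field_simp
          have hττ : τ' - τs ≤ δ := by
            rw [hτ'def]
            have := min_le_right 1 (τs + δ)
            linarith
          have hττ0 : 0 ≤ τ' - τs := by linarith
          have hkey : (τ' - τs) * ⟪Δ, x i⟫ ≥ -(δ * |⟪Δ, x i⟫|) := by
            have h1 : -(|⟪Δ, x i⟫|) ≤ ⟪Δ, x i⟫ := neg_abs_le _
            have k1 := mul_le_mul_of_nonneg_left h1 hττ0
            have k2 := mul_le_mul_of_nonneg_right hττ (abs_nonneg ⟪Δ, x i⟫)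
            nlinarith only [k1, k2]
          have hmargτs := hτsmem.2 i
          nlinarith only [hmargτs, hδb, hkey, hδpos]
      have := le_csSup hTbdd hτ'mem
      rw [← hτsdef] at this
      linarith
    -- conclusions from 1 ∈ T
    constructor
    · intro i
      have := hone.2 i
      rw [hwt1, inner_add_left]
      linarith [this]
    · -- Lyapunov decrease at τ = 1
      have hT := hTaylor 1 zero_le_one hone.2
      rw [hψ0, hψ1, hΔQ] at hT
      exact gdm_aux_step β η Hs Q P (D 0) A γ (L (w t)) (L (w (t+1))) hβ0 h1β hη hHspos hηHs
        hP0 hQ0 hA' hγdef hD0le hT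
  -- ============ the invariant by induction ============
  have inv : ∀ t : ℕ, 1 ≤ t →
      (∀ i, s₀ ≤ ⟪w t, x i⟫) ∧
      L (w t) + A * ‖m (t-1)‖^2 ≤ L (w 1) ∧
      (2 ≤ t → L (w t) + A * ‖m (t-1)‖^2 < L (w 1)) := by
    intro t ht
    induction t with
    | zero => omega
    | succ n ih =>
      rcases Nat.lt_or_ge 1 (n+1) with hgt | hle
      · -- n ≥ 1
        have hn1 : 1 ≤ n := by omega
        obtain ⟨hmarg, hEle, hElt⟩ := ih hn1
        obtain ⟨hmarg', hdec⟩ := key n hn1 hmarg hEle hElt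
        have hns : n + 1 - 1 = n := by omega
        refine ⟨hmarg', ?_, ?_⟩
        · rw [hns]
          have : 0 ≤ γ * ‖m n‖^2 := by positivity
          linarith
        · intro _
          rw [hns]
          rcases Nat.lt_or_ge n 2 with h2 | h2
          · -- n = 1
            have hn : n = 1 := by omega
            rw [hn] at hdec ⊢
            have : 0 < γ * ‖m 1‖^2 := mul_pos hγpos hm1pos
            have hE1 : L (w 1) + A * ‖m (1-1)‖^2 = L (w 1) := by
              norm_num [hm0]
            rw [hE1] at hdec
            linarith
          · have := hElt h2
            have h0 : 0 ≤ γ * ‖m n‖^2 := by positivity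
            linarith
      · -- n + 1 = 1
        have hn0 : n = 0 := by omega
        subst hn0
        refine ⟨?_, ?_, ?_⟩
        · exact hmargin (w 1) le_rfl
        · simp [hm0]
        · omega
  have step : ∀ t : ℕ, 1 ≤ t →
      L (w (t+1)) + A * ‖m t‖^2 ≤ (L (w t) + A * ‖m (t-1)‖^2) - γ * ‖m t‖^2 := by
    intro t ht
    obtain ⟨h1, h2, h3⟩ := inv t ht
    exact (key t ht h1 h2 h3).2
  -- partial sums bound
  have hEnonneg : ∀ t : ℕ, 0 ≤ L (w t) + A * ‖m (t-1)‖^2 := by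
    intro t
    have := hLnonneg (w t)
    have h2 : 0 ≤ A * ‖m (t-1)‖^2 := by positivity
    linarith
  have hpartial : ∀ n : ℕ,
      (L (w (n+1)) + A * ‖m n‖^2) + ∑ k ∈ Finset.range n, γ * ‖m (k+1)‖^2 ≤ L (w 1) := by
    intro n
    induction n with
    | zero => simp [hm0]
    | succ p ih =>
      rw [Finset.sum_range_succ]
      have hs := step (p+1) (by omega)
      have hps : p + 1 - 1 = p := by omega
      rw [hps] at hs
      linarith
  have hsumM : ∀ n : ℕ, ∑ k ∈ Finset.range n, ‖m (k+1)‖^2 ≤ L (w 1) / γ := by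
    intro n
    have h1 := hpartial n
    have h2 := hEnonneg (n+1)
    have hns : n + 1 - 1 = n := by omega
    rw [hns] at h2
    have h3 : ∑ k ∈ Finset.range n, γ * ‖m (k+1)‖^2 ≤ L (w 1) := by linarith
    rw [← Finset.mul_sum] at h3
    rw [le_div_iff₀ hγpos]
    linarith
  -- steps in terms of m
  have hstepnorm : ∀ t : ℕ, 1 ≤ t → ‖w (t+1) - w t‖^2 = η^2 * ‖m t‖^2 := by
    intro t ht
    rw [hwrec t ht]
    rw [show w t - η • m t - w t = -(η • m t) by abel]
    rw [norm_neg, norm_smul, Real.norm_eq_abs, abs_of_pos hη, mul_pow]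
  have hfnonneg : ∀ t : ℕ, (0:ℝ) ≤ ‖w (t + 2) - w (t + 1)‖ ^ 2 := fun t => by positivity
  have hfsum : ∀ n : ℕ, ∑ k ∈ Finset.range n, ‖w (k + 2) - w (k + 1)‖ ^ 2
      ≤ η^2 * (L (w 1) / γ) := by
    intro n
    have h1 : ∀ k ∈ Finset.range n, ‖w (k + 2) - w (k + 1)‖ ^ 2 = η^2 * ‖m (k+1)‖^2 := by
      intro k _
      exact hstepnorm (k+1) (by omega)
    rw [Finset.sum_congr rfl h1, ← Finset.mul_sum]
    exact mul_le_mul_of_nonneg_left (hsumM n) (by positivity)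
  have hsummable : Summable (fun t : ℕ => ‖w (t + 2) - w (t + 1)‖ ^ 2) :=
    summable_of_sum_range_le hfnonneg hfsum
  refine ⟨hsummable, ?_⟩
  -- the √t bound
  set S := η^2 * (L (w 1) / γ) with hSdef
  have hS0 : 0 ≤ S := by
    rw [hSdef]
    have := hLnonneg (w 1)
    positivity
  refine ⟨‖w 1‖ + Real.sqrt S + 1, by positivity, ?_⟩
  intro t ht
  have htel : ∑ k ∈ Finset.range (t-1), (w (k+2) - w (k+1)) = w t - w 1 := by
    have h := Finset.sum_range_sub (fun k => w (k+1)) (t-1)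
    rw [show t - 1 + 1 = t by omega] at h
    exact h
  have hnorm1 : ‖w t‖ ≤ ‖w 1‖ + ∑ k ∈ Finset.range (t-1), ‖w (k+2) - w (k+1)‖ := by
    have h1 : ‖w t - w 1‖ ≤ ∑ k ∈ Finset.range (t-1), ‖w (k+2) - w (k+1)‖ := by
      rw [← htel]
      exact norm_sum_le _ _
    have h2 : ‖w t‖ ≤ ‖w 1‖ + ‖w t - w 1‖ := by
      have := norm_add_le (w 1) (w t - w 1)
      simpa using this
    linarith
  have hCS : (∑ k ∈ Finset.range (t-1), ‖w (k+2) - w (k+1)‖)^2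
      ≤ (t : ℝ) * S := by
    have h1 := sq_sum_le_card_mul_sum_sq
      (s := Finset.range (t-1)) (f := fun k => ‖w (k+2) - w (k+1)‖)
    simp only [Finset.card_range] at h1
    have h2 := hfsum (t-1)
    have h3 : ((t-1 : ℕ) : ℝ) ≤ (t : ℝ) := by
      exact_mod_cast Nat.sub_le t 1
    calc (∑ k ∈ Finset.range (t-1), ‖w (k+2) - w (k+1)‖)^2
        ≤ ((t-1 : ℕ) : ℝ) * ∑ k ∈ Finset.range (t-1), ‖w (k+2) - w (k+1)‖^2 := h1
      _ ≤ ((t-1 : ℕ) : ℝ) * S := by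
          apply mul_le_mul_of_nonneg_left _ (by positivity)
          exact h2
      _ ≤ (t : ℝ) * S := mul_le_mul_of_nonneg_right h3 hS0
  have hsq : ∑ k ∈ Finset.range (t-1), ‖w (k+2) - w (k+1)‖ ≤ Real.sqrt ((t:ℝ) * S) :=
    Real.le_sqrt_of_sq_le hCS
  have hsplit : Real.sqrt ((t:ℝ) * S) = Real.sqrt t * Real.sqrt S :=
    Real.sqrt_mul (by positivity) S
  have h1t : (1:ℝ) ≤ Real.sqrt t := by
    rw [show (1:ℝ) = Real.sqrt 1 by simp]
    exact Real.sqrt_le_sqrt (by exact_mod_cast ht)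
  have hfin : ‖w t‖ ≤ ‖w 1‖ + Real.sqrt t * Real.sqrt S := by
    rw [← hsplit]; linarith
  have : (‖w 1‖ + Real.sqrt t * Real.sqrt S) ≤ (‖w 1‖ + Real.sqrt S + 1) * Real.sqrt t := by
    nlinarith [norm_nonneg (w 1), Real.sqrt_nonneg S, Real.sqrt_nonneg (t:ℝ)]
  linarith
end

section
/- Under the stated GDM conditions, the squared gradient norms along the trajectory are summable: ∑_{t=1}^∞ ‖∇L(w(t))‖² < ∞. -/
open Filter Topology RealInnerProductSpace MeasureTheory

set_option linter.unusedVariables false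
set_option maxHeartbeats 2000000

lemma descent_scalar {N : ℕ} (ℓ ℓ' : ℝ → ℝ)
    (hdiff : ∀ s : ℝ, HasDerivAt ℓ (ℓ' s) s)
    (s₀ H₀ : ℝ) (hH₀pos : 0 < H₀)
    (hH₀ : ∀ a b : ℝ, s₀ ≤ a → s₀ ≤ b → |ℓ' a - ℓ' b| ≤ H₀ * |a - b|)
    (A B : Fin N → ℝ) (SB : ℝ) (hSB : ∑ i, (B i) ^ 2 ≤ SB)
    (τ₀ : ℝ) (hτ₀ : 0 ≤ τ₀)
    (hmar : ∀ τ ∈ Set.Icc (0:ℝ) τ₀, ∀ i, s₀ ≤ A i + τ * B i) :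
    (1 / (N:ℝ)) * ∑ i, ℓ (A i + τ₀ * B i) ≤
      (1 / (N:ℝ)) * ∑ i, ℓ (A i) + τ₀ * ((1 / (N:ℝ)) * ∑ i, ℓ' (A i) * B i)
      + (H₀ * SB / N / 2) * τ₀ ^ 2 := by
  have hSB0 : (0:ℝ) ≤ SB := le_trans (Finset.sum_nonneg fun i _ => sq_nonneg _) hSB
  set φd : ℝ → ℝ := fun τ => (1 / (N:ℝ)) * ∑ i, ℓ' (A i + τ * B i) * B i with hφd
  set ψ : ℝ → ℝ := fun τ => (1 / (N:ℝ)) * ∑ i, ℓ (A i + τ * B i)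
      - τ * φd 0 - (H₀ * SB / N / 2) * τ ^ 2 with hψ
  have hder : ∀ τ : ℝ, HasDerivAt ψ (φd τ - φd 0 - (H₀ * SB / N) * τ) τ := by
    intro τ
    have h1 : ∀ i : Fin N, HasDerivAt (fun τ : ℝ => ℓ (A i + τ * B i))
        (ℓ' (A i + τ * B i) * B i) τ := by
      intro i
      have haff : HasDerivAt (fun τ : ℝ => A i + τ * B i) (B i) τ :=
        (hasDerivAt_mul_const (B i)).const_add (A i)
      exact (hdiff (A i + τ * B i)).comp τ haff
    have h2 : HasDerivAt (fun τ : ℝ => (1 / (N:ℝ)) * ∑ i, ℓ (A i + τ * B i))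
        ((1 / (N:ℝ)) * ∑ i, ℓ' (A i + τ * B i) * B i) τ := by
      have := HasDerivAt.fun_sum (fun i (_ : i ∈ Finset.univ) => h1 i)
      exact this.const_mul _
    have h3 : HasDerivAt (fun τ : ℝ => τ * φd 0) (φd 0) τ := hasDerivAt_mul_const _
    have h4 : HasDerivAt (fun τ : ℝ => (H₀ * SB / N / 2) * τ ^ 2)
        ((H₀ * SB / N) * τ) τ := by
      have h := (hasDerivAt_pow 2 τ).const_mul (H₀ * SB / (N:ℝ) / 2)
      have e : (H₀ * SB / (N:ℝ) / 2) * ((2:ℕ) * τ ^ (2-1)) = (H₀ * SB / N) * τ := by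
        push_cast; ring
      rw [e] at h
      exact h
    exact (h2.sub h3).sub h4
  have hψanti : AntitoneOn ψ (Set.Icc 0 τ₀) := by
    apply antitoneOn_of_deriv_nonpos (convex_Icc 0 τ₀)
    · exact fun τ _ => (hder τ).differentiableAt.continuousAt.continuousWithinAt
    · intro τ hτ
      exact (hder τ).differentiableAt.differentiableWithinAt
    · intro τ hτ
      rw [interior_Icc] at hτ
      rw [(hder τ).deriv]
      have hτm : τ ∈ Set.Icc (0:ℝ) τ₀ := ⟨le_of_lt hτ.1, le_of_lt hτ.2⟩
      have key : φd τ - φd 0 ≤ (H₀ * SB / N) * τ := by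
        rcases Nat.eq_zero_or_pos N with hN0 | hNpos'
        · subst hN0
          simp only [hφd, Finset.univ_eq_empty, Finset.sum_empty, mul_zero, sub_zero,
            sub_self, Nat.cast_zero, div_zero, zero_mul]
          norm_num
        have hNpos : (0:ℝ) < N := by exact_mod_cast hNpos'
        have hsum : ∑ i, ℓ' (A i + τ * B i) * B i - ∑ i, ℓ' (A i) * B i
            ≤ H₀ * τ * ∑ i, (B i)^2 := by
          rw [← Finset.sum_sub_distrib, Finset.mul_sum]
          apply Finset.sum_le_sum
          intro i _
          have h5 : ℓ' (A i + τ * B i) * B i - ℓ' (A i) * B i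
              = (ℓ' (A i + τ * B i) - ℓ' (A i)) * B i := by ring
          rw [h5]
          have habs : |ℓ' (A i + τ * B i) - ℓ' (A i)| ≤ H₀ * (τ * |B i|) := by
            have := hH₀ (A i + τ * B i) (A i) (hmar τ hτm i)
              (by simpa using hmar 0 ⟨le_refl _, hτ₀⟩ i)
            have e : |A i + τ * B i - A i| = τ * |B i| := by
              rw [show A i + τ * B i - A i = τ * B i by ring, abs_mul,
                abs_of_nonneg hτm.1]
            rwa [e] at this
          have habs2 : |B i| * |B i| = (B i)^2 := by
            rw [← abs_mul, abs_mul_self]; ring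
          calc (ℓ' (A i + τ * B i) - ℓ' (A i)) * B i
              ≤ |(ℓ' (A i + τ * B i) - ℓ' (A i)) * B i| := le_abs_self _
            _ = |ℓ' (A i + τ * B i) - ℓ' (A i)| * |B i| := abs_mul _ _
            _ ≤ (H₀ * (τ * |B i|)) * |B i| := by
                exact mul_le_mul_of_nonneg_right habs (abs_nonneg _)
            _ = H₀ * τ * (|B i| * |B i|) := by ring
            _ = H₀ * τ * (B i)^2 := by rw [habs2]
        have e2 : φd τ - φd 0 = (1/(N:ℝ)) *
            (∑ i, ℓ' (A i + τ * B i) * B i - ∑ i, ℓ' (A i) * B i) := by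
          simp only [hφd, zero_mul, add_zero]; ring
        rw [e2]
        calc (1/(N:ℝ)) * (∑ i, ℓ' (A i + τ * B i) * B i - ∑ i, ℓ' (A i) * B i)
            ≤ (1/(N:ℝ)) * (H₀ * τ * ∑ i, (B i)^2) := by
              apply mul_le_mul_of_nonneg_left hsum (by positivity)
          _ ≤ (1/(N:ℝ)) * (H₀ * τ * SB) := by
              apply mul_le_mul_of_nonneg_left _ (by positivity)
              have hτpos : (0:ℝ) ≤ τ := hτm.1
              apply mul_le_mul_of_nonneg_left hSB (by positivity)
          _ = (H₀ * SB / N) * τ := by ring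
      linarith
  have h0m : (0:ℝ) ∈ Set.Icc (0:ℝ) τ₀ := ⟨le_refl _, hτ₀⟩
  have hτm : τ₀ ∈ Set.Icc (0:ℝ) τ₀ := ⟨hτ₀, le_refl _⟩
  have hmono := hψanti h0m hτm hτ₀
  have e0 : ψ 0 = (1 / (N:ℝ)) * ∑ i, ℓ (A i) := by
    simp [hψ]
  have e1 : ψ τ₀ = (1 / (N:ℝ)) * ∑ i, ℓ (A i + τ₀ * B i)
      - τ₀ * φd 0 - (H₀ * SB / N / 2) * τ₀ ^ 2 := rfl
  have e2 : φd 0 = (1 / (N:ℝ)) * ∑ i, ℓ' (A i) * B i := by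
    simp [hφd]
  rw [e0, e1, e2] at hmono
  linarith
theorem stmt4
    {d N : ℕ} (hN : 1 ≤ N)
    (x : Fin N → EuclideanSpace ℝ (Fin d))
    (ℓ ℓ' : ℝ → ℝ)
    (hdiff : ∀ s : ℝ, HasDerivAt ℓ (ℓ' s) s)
    (L : EuclideanSpace ℝ (Fin d) → ℝ)
    (hLdef : ∀ w : EuclideanSpace ℝ (Fin d), L w = (1 / (N : ℝ)) * ∑ i, ℓ ⟪w, x i⟫)
    (gradL : EuclideanSpace ℝ (Fin d) → EuclideanSpace ℝ (Fin d))
    (hgraddef : ∀ w : EuclideanSpace ℝ (Fin d),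
      gradL w = (1 / (N : ℝ)) • ∑ i, ℓ' ⟪w, x i⟫ • x i)
    (hsep : ∃ u : EuclideanSpace ℝ (Fin d), ∀ i, 0 < ⟪u, x i⟫)
    (σmax : ℝ) (hσpos : 0 < σmax)
    (hσ : ∀ c : Fin N → ℝ, ‖∑ i, c i • x i‖ ≤ σmax * Real.sqrt (∑ i, (c i) ^ 2))
    (wmax : EuclideanSpace ℝ (Fin d))
    (hwmax : ∀ i, 1 ≤ ⟪wmax, x i⟫)
    (hwmaxmin : ∀ v : EuclideanSpace ℝ (Fin d), (∀ i, 1 ≤ ⟪v, x i⟫) → ‖wmax‖ ≤ ‖v‖)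
    (hℓpos : ∀ s : ℝ, 0 < ℓ s) (hℓ'neg : ∀ s : ℝ, ℓ' s < 0)
    (hℓtop : Tendsto ℓ atTop (𝓝 0))
    (hℓ'top : Tendsto ℓ' atTop (𝓝 0))
    (hℓ'bot : Filter.limsup ℓ' atBot < 0)
    (μp μm xp xm : ℝ) (hμp : 0 < μp) (hμm : 0 < μm)
    (htailp : ∀ s : ℝ, xp < s → -ℓ' s ≤ (1 + Real.exp (-μp * s)) * Real.exp (-s))
    (htailm : ∀ s : ℝ, xm < s → (1 - Real.exp (-μm * s)) * Real.exp (-s) ≤ -ℓ' s)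
    (hloc : ∀ s : ℝ, ∃ H : ℝ, 0 < H ∧
      ∀ a b : ℝ, s ≤ a → s ≤ b → |ℓ' a - ℓ' b| ≤ H * |a - b|)
    (η β : ℝ) (hη : 0 < η) (hβ0 : 0 ≤ β) (hβ1 : β < 1)
    (w m : ℕ → EuclideanSpace ℝ (Fin d))
    (hm0 : m 0 = 0) (hw0 : w 0 = w 1)
    (hmrec : ∀ t : ℕ, 1 ≤ t → m t = β • m (t - 1) + (1 - β) • gradL (w t))
    (hwrec : ∀ t : ℕ, 1 ≤ t → w (t + 1) = w t - η • m t)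
    (s₀ H₀ : ℝ) (hs₀ : ℓ s₀ = N * L (w 1)) (hH₀pos : 0 < H₀)
    (hH₀ : ∀ a b : ℝ, s₀ ≤ a → s₀ ≤ b → |ℓ' a - ℓ' b| ≤ H₀ * |a - b|)
    (hηlt : η < 2 * N / (σmax ^ 2 * H₀))
    :
    Summable (fun t : ℕ => ‖gradL (w (t + 1))‖ ^ 2) := by
  have hNR : (0:ℝ) < N := by exact_mod_cast hN
  haveI : Nonempty (Fin N) := Fin.pos_iff_nonempty.mp hN
  have hanti : StrictAnti ℓ := by
    apply strictAnti_of_deriv_neg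
    intro s
    rw [(hdiff s).deriv]
    exact hℓ'neg s
  have hNL : ∀ v : EuclideanSpace ℝ (Fin d), (N:ℝ) * L v = ∑ i, ℓ ⟪v, x i⟫ := by
    intro v
    rw [hLdef v]
    field_simp
  have hLpos : ∀ v : EuclideanSpace ℝ (Fin d), 0 < L v := by
    intro v
    rw [hLdef v]
    have : (0:ℝ) < ∑ i, ℓ ⟪v, x i⟫ := by
      apply Finset.sum_pos (fun i _ => hℓpos _)
      exact Finset.univ_nonempty
    positivity
  have hsub : ∀ v : EuclideanSpace ℝ (Fin d), (N:ℝ) * L v ≤ ℓ s₀ → ∀ i, s₀ ≤ ⟪v, x i⟫ := by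
    intro v hv i
    by_contra hcon
    push_neg at hcon
    have h1 : ℓ ⟪v, x i⟫ ≤ ∑ j, ℓ ⟪v, x j⟫ :=
      Finset.single_le_sum (f := fun j => ℓ ⟪v, x j⟫) (fun j _ => (hℓpos _).le)
        (Finset.mem_univ i)
    have h2 : ℓ s₀ < ℓ ⟪v, x i⟫ := hanti hcon
    rw [← hNL] at h1
    linarith
  have hsubs : ∀ v : EuclideanSpace ℝ (Fin d), (N:ℝ) * L v < ℓ s₀ → ∀ i, s₀ < ⟪v, x i⟫ := by
    intro v hv i
    by_contra hcon
    push_neg at hcon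
    have h1 : ℓ ⟪v, x i⟫ ≤ ∑ j, ℓ ⟪v, x j⟫ :=
      Finset.single_le_sum (f := fun j => ℓ ⟪v, x j⟫) (fun j _ => (hℓpos _).le)
        (Finset.mem_univ i)
    have h2 : ℓ s₀ ≤ ℓ ⟪v, x i⟫ := hanti.antitone hcon
    rw [← hNL] at h1
    linarith
  have hsum_sq : ∀ z : EuclideanSpace ℝ (Fin d),
      ∑ i, (⟪z, x i⟫ : ℝ) ^ 2 ≤ σmax ^ 2 * ‖z‖ ^ 2 := by
    intro z
    set S := ∑ i, (⟪z, x i⟫ : ℝ) ^ 2 with hSdef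
    have hS0 : 0 ≤ S := Finset.sum_nonneg fun i _ => sq_nonneg _
    have h1 : S = ⟪z, ∑ i, (⟪z, x i⟫ : ℝ) • x i⟫ := by
      rw [inner_sum]
      apply Finset.sum_congr rfl
      intro i _
      rw [real_inner_smul_right]
      ring
    have h2 : (S:ℝ) ≤ ‖z‖ * ‖∑ i, (⟪z, x i⟫ : ℝ) • x i‖ := by
      rw [h1]
      exact real_inner_le_norm _ _
    have h3 : ‖∑ i, (⟪z, x i⟫ : ℝ) • x i‖ ≤ σmax * Real.sqrt S :=
      hσ (fun i => ⟪z, x i⟫)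
    have h4 : S ≤ ‖z‖ * (σmax * Real.sqrt S) := by
      calc S ≤ ‖z‖ * ‖∑ i, (⟪z, x i⟫ : ℝ) • x i‖ := h2
        _ ≤ ‖z‖ * (σmax * Real.sqrt S) :=
            mul_le_mul_of_nonneg_left h3 (norm_nonneg z)
    nlinarith [sq_nonneg (Real.sqrt S - σmax * ‖z‖), Real.sq_sqrt hS0,
      Real.sqrt_nonneg S, norm_nonneg z]
  -- constants
  obtain ⟨αr, hαr⟩ : ∃ y : ℝ, y = η * (1 - β) := ⟨_, rfl⟩
  have hαpos : 0 < αr := by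
    rw [hαr]
    apply mul_pos hη
    linarith only [hβ1]
  obtain ⟨Kc, hKc⟩ : ∃ y : ℝ, y = σmax ^ 2 * H₀ / N := ⟨_, rfl⟩
  have hKpos : 0 < Kc := by rw [hKc]; positivity
  obtain ⟨cc, hcc⟩ : ∃ y : ℝ, y = β / (2 * αr) := ⟨_, rfl⟩
  have hcc0 : 0 ≤ cc := by
    rw [hcc]
    exact div_nonneg hβ0 (by linarith only [hαpos])
  obtain ⟨ρ, hρ⟩ : ∃ y : ℝ, y = 1 / η - Kc / 2 := ⟨_, rfl⟩
  have hρpos : 0 < ρ := by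
    have hd : 0 < σmax ^ 2 * H₀ := by positivity
    have key : η * (σmax ^ 2 * H₀) < 2 * N := (lt_div_iff₀ hd).mp hηlt
    have key2 : Kc * η < 2 := by
      have e : Kc * η * N = η * (σmax ^ 2 * H₀) := by
        rw [hKc]; field_simp
      have : Kc * η * N < 2 * N := by rw [e]; linarith
      exact (mul_lt_mul_iff_left₀ hNR).mp (by linarith)
    rw [hρ, sub_pos, div_lt_div_iff₀ (by norm_num : (0:ℝ) < 2) hη]
    linarith
  -- GDM one-step vector identity
  have hqrel : ∀ t : ℕ, 1 ≤ t →
      w (t + 1) - w t = β • (w t - w (t - 1)) - αr • gradL (w t) := by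
    intro t ht
    have hm' : η • m (t - 1) = w (t - 1) - w t := by
      rcases eq_or_lt_of_le ht with h1 | h2
      · rw [← h1]
        simp [hm0, ← hw0]
      · have ht2 : 1 ≤ t - 1 := by omega
        have he : (t - 1) + 1 = t := by omega
        have := hwrec (t - 1) ht2
        rw [he] at this
        rw [this]
        abel
    have h1 : w (t + 1) = w t - η • (β • m (t - 1) + (1 - β) • gradL (w t)) := by
      rw [hwrec t ht, hmrec t ht]
    have h2 : η • (β • m (t - 1) + (1 - β) • gradL (w t))
        = β • (w (t - 1) - w t) + αr • gradL (w t) := by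
      rw [smul_add, smul_comm η β, hm', hαr, mul_smul]
    rw [h1, h2]
    module
  -- inner-product form of the gradient
  have hginner : ∀ v z : EuclideanSpace ℝ (Fin d),
      (⟪gradL v, z⟫ : ℝ) = (1 / (N:ℝ)) * ∑ i, ℓ' ⟪v, x i⟫ * ⟪z, x i⟫ := by
    intro v z
    rw [hgraddef v, real_inner_smul_left, sum_inner]
    congr 1
    apply Finset.sum_congr rfl
    intro i _
    rw [real_inner_smul_left]
    congr 1
    exact real_inner_comm _ _
  obtain ⟨Φ, hΦ⟩ : ∃ F : ℕ → ℝ, F = fun t => L (w t) + cc * ‖w t - w (t - 1)‖ ^ 2 :=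
    ⟨_, rfl⟩
  obtain ⟨D, hD⟩ : ∃ F : ℕ → ℝ, F = fun t => ‖w (t + 1) - w t‖ ^ 2 := ⟨_, rfl⟩
  -- main one-step descent
  have hstep : ∀ t : ℕ, 1 ≤ t → (∀ i, s₀ ≤ ⟪w t, x i⟫) → Φ t ≤ L (w 1) →
      Φ (t + 1) + ρ * D t ≤ Φ t := by
    intro t ht hmarg hΦle
    obtain ⟨q, hqdef⟩ : ∃ y : EuclideanSpace ℝ (Fin d), y = w (t + 1) - w t := ⟨_, rfl⟩
    obtain ⟨p, hpdef⟩ : ∃ y : EuclideanSpace ℝ (Fin d), y = w t - w (t - 1) := ⟨_, rfl⟩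
    obtain ⟨g, hgdef⟩ : ∃ y : EuclideanSpace ℝ (Fin d), y = gradL (w t) := ⟨_, rfl⟩
    have hq : q = β • p - αr • g := by
      rw [hqdef, hpdef, hgdef]
      exact hqrel t ht
    have hΦt : Φ t = L (w t) + cc * ‖p‖ ^ 2 := by
      simp only [hΦ]
      rw [hpdef]
    have hΦt1 : Φ (t + 1) = L (w (t + 1)) + cc * ‖q‖ ^ 2 := by
      simp only [hΦ, Nat.add_sub_cancel]
      rw [hqdef]
    have hDt : D t = ‖q‖ ^ 2 := by
      simp only [hD]
      rw [hqdef]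
    by_cases hq0 : q = 0
    · have hwt1 : w (t + 1) = w t := by
        have h := hq0
        rw [hqdef, sub_eq_zero] at h
        exact h
      rw [hΦt1, hDt, hΦt, hq0]
      simp only [norm_zero]
      have h0 : 0 ≤ cc * ‖p‖ ^ 2 := by positivity
      rw [hwt1]
      nlinarith only [hρpos, h0]
    -- main case
    have hQpos : 0 < ‖q‖ ^ 2 := by
      have : 0 < ‖q‖ := norm_pos_iff.mpr hq0
      positivity
    have hSB : ∑ i, (⟪q, x i⟫ : ℝ) ^ 2 ≤ σmax ^ 2 * ‖q‖ ^ 2 := hsum_sq q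
    have hGq : (⟪g, q⟫ : ℝ) = (1 / (N:ℝ)) * ∑ i, ℓ' ⟪w t, x i⟫ * ⟪q, x i⟫ := by
      rw [hgdef]
      exact hginner (w t) q
    have hipq : (⟪p, q⟫ : ℝ) ≤ (‖p‖ ^ 2 + ‖q‖ ^ 2) / 2 := by
      nlinarith only [real_inner_le_norm p q, sq_nonneg (‖p‖ - ‖q‖), norm_nonneg p,
        norm_nonneg q]
    have hαg : αr • g = β • p - q := by
      rw [hq]; abel
    have hαgq : αr * ⟪g, q⟫ = β * ⟪p, q⟫ - ‖q‖ ^ 2 := by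
      calc αr * ⟪g, q⟫ = ⟪αr • g, q⟫ := (real_inner_smul_left _ _ _).symm
        _ = ⟪β • p - q, q⟫ := by rw [hαg]
        _ = β * ⟪p, q⟫ - ‖q‖ ^ 2 := by
            rw [inner_sub_left, real_inner_smul_left, real_inner_self_eq_norm_sq]
    have hX : (⟪g, q⟫ : ℝ) + (Kc / 2) * ‖q‖ ^ 2 ≤ cc * ‖p‖ ^ 2 - (ρ + cc) * ‖q‖ ^ 2 := by
      apply (mul_le_mul_iff_right₀ hαpos).mp
      have hαne : αr ≠ 0 := ne_of_gt hαpos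
      have hηne : η ≠ 0 := ne_of_gt hη
      have hRHS : αr * (cc * ‖p‖ ^ 2 - (ρ + cc) * ‖q‖ ^ 2)
          = (β / 2) * ‖p‖ ^ 2 - ((1 - β) - αr * (Kc / 2)) * ‖q‖ ^ 2
            - (β / 2) * ‖q‖ ^ 2 := by
        have h1β : (1:ℝ) - β ≠ 0 := sub_ne_zero.mpr (by linarith only [hβ1])
        rw [hcc, hρ, hαr]
        field_simp
        ring
      have hLHS : αr * ((⟪g, q⟫ : ℝ) + (Kc / 2) * ‖q‖ ^ 2)
          = (β * ⟪p, q⟫ - ‖q‖ ^ 2) + αr * ((Kc / 2) * ‖q‖ ^ 2) := by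
        rw [mul_add, hαgq]
      have hb : β * ⟪p, q⟫ ≤ β * ((‖p‖ ^ 2 + ‖q‖ ^ 2) / 2) :=
        mul_le_mul_of_nonneg_left hipq hβ0
      rw [hLHS, hRHS]
      have e3 : αr * ((Kc / 2) * ‖q‖ ^ 2) = (αr * (Kc / 2)) * ‖q‖ ^ 2 := by ring
      rw [e3]
      linarith only [hb]
    -- the segment stays in the good region
    have hseg : ∀ τ ∈ Set.Icc (0:ℝ) 1, ∀ i, s₀ ≤ ⟪w t, x i⟫ + τ * ⟪q, x i⟫ := by
      by_contra hcon
      push_neg at hcon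
      obtain ⟨τ₁, hτ₁m, i₁, hi₁⟩ := hcon
      set Bad : Set ℝ := {τ | τ ∈ Set.Icc (0:ℝ) τ₁ ∧ ∃ i, ⟪w t, x i⟫ + τ * ⟪q, x i⟫ < s₀}
        with hBadDef
      have hτ₁Bad : τ₁ ∈ Bad := ⟨⟨hτ₁m.1, le_refl _⟩, i₁, hi₁⟩
      have hBadne : Bad.Nonempty := ⟨τ₁, hτ₁Bad⟩
      have hBadbdd : BddBelow Bad := ⟨0, fun τ hτ => hτ.1.1⟩
      obtain ⟨τs, hτsdef⟩ : ∃ y : ℝ, y = sInf Bad := ⟨_, rfl⟩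
      have hτs0 : 0 ≤ τs := by
        rw [hτsdef]
        exact le_csInf hBadne (fun τ hτ => hτ.1.1)
      have hτsle : τs ≤ τ₁ := by
        rw [hτsdef]
        exact csInf_le hBadbdd hτ₁Bad
      have hτs1 : τs ≤ 1 := le_trans hτsle hτ₁m.2
      have hbefore : ∀ σ, 0 ≤ σ → σ < τs → ∀ i, s₀ ≤ ⟪w t, x i⟫ + σ * ⟪q, x i⟫ := by
        intro σ hσ0 hστ i
        by_contra hc
        push_neg at hc
        have hmem : σ ∈ Bad := ⟨⟨hσ0, le_trans hστ.le hτsle⟩, i, hc⟩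
        have hle2 := csInf_le hBadbdd hmem
        rw [← hτsdef] at hle2
        linarith only [hle2, hστ]
      have hat : ∀ i, s₀ ≤ ⟪w t, x i⟫ + τs * ⟪q, x i⟫ := by
        intro i
        rcases eq_or_lt_of_le hτs0 with h0 | hpos
        · rw [← h0]
          simpa using hmarg i
        by_contra hc
        push_neg at hc
        obtain ⟨ε, hε⟩ : ∃ y : ℝ, y = s₀ - (⟪w t, x i⟫ + τs * ⟪q, x i⟫) := ⟨_, rfl⟩
        have hεpos : 0 < ε := by rw [hε]; linarith only [hc]
        obtain ⟨δ, hδ⟩ : ∃ y : ℝ, y = min τs (ε / (|(⟪q, x i⟫ : ℝ)| + 1)) := ⟨_, rfl⟩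
        have hδpos : 0 < δ := by
          rw [hδ]
          exact lt_min hpos (by positivity)
        have hδτ : δ ≤ τs := by rw [hδ]; exact min_le_left _ _
        have hδε : δ ≤ ε / (|(⟪q, x i⟫ : ℝ)| + 1) := by rw [hδ]; exact min_le_right _ _
        have hσ0 : 0 ≤ τs - δ / 2 := by linarith only [hδτ, hδpos]
        have hσlt : τs - δ / 2 < τs := by linarith only [hδpos]
        have hval := hbefore (τs - δ / 2) hσ0 hσlt i
        have habs : -((δ / 2) * ⟪q, x i⟫) ≤ (δ / 2) * |(⟪q, x i⟫ : ℝ)| := by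
          rw [← mul_neg]
          exact mul_le_mul_of_nonneg_left (neg_le_abs _) (by linarith only [hδpos])
        have habs2 : (δ / 2) * |(⟪q, x i⟫ : ℝ)| < ε := by
          have h1 : (δ / 2) * |(⟪q, x i⟫ : ℝ)| ≤ (ε / (|(⟪q, x i⟫ : ℝ)| + 1)) * |(⟪q, x i⟫ : ℝ)| := by
            apply mul_le_mul_of_nonneg_right _ (abs_nonneg _)
            linarith only [hδε, hδpos]
          have h2 : (ε / (|(⟪q, x i⟫ : ℝ)| + 1)) * |(⟪q, x i⟫ : ℝ)| < ε := by
            rw [div_mul_eq_mul_div, div_lt_iff₀ (by positivity)]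
            nlinarith only [abs_nonneg (⟪q, x i⟫ : ℝ), hεpos]
          linarith only [h1, h2]
        have hexp : ⟪w t, x i⟫ + (τs - δ / 2) * ⟪q, x i⟫
            = (⟪w t, x i⟫ + τs * ⟪q, x i⟫) + (-((δ / 2) * ⟪q, x i⟫)) := by ring
        rw [hexp] at hval
        have : ⟪w t, x i⟫ + τs * ⟪q, x i⟫ = s₀ - ε := by rw [hε]; ring
        rw [this] at hval
        linarith only [hval, habs, habs2]
      have hmar2 : ∀ τ ∈ Set.Icc (0:ℝ) τs, ∀ i,
          s₀ ≤ (fun j => (⟪w t, x j⟫ : ℝ)) i + τ * (fun j => (⟪q, x j⟫ : ℝ)) i := by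
        intro τ hτ i
        rcases lt_or_eq_of_le hτ.2 with h | h
        · exact hbefore τ hτ.1 h i
        · rw [h]; exact hat i
      have hdesc := descent_scalar ℓ ℓ' hdiff s₀ H₀ hH₀pos hH₀
        (fun j => (⟪w t, x j⟫ : ℝ)) (fun j => (⟪q, x j⟫ : ℝ))
        (σmax ^ 2 * ‖q‖ ^ 2) (hsum_sq q) τs hτs0 hmar2
      have hLτeq : L (w t + τs • q) = (1 / (N:ℝ)) * ∑ i, ℓ (⟪w t, x i⟫ + τs * ⟪q, x i⟫) := by
        rw [hLdef]
        congr 1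
        apply Finset.sum_congr rfl
        intro i _
        congr 1
        rw [inner_add_left, real_inner_smul_left]
      have hLaeq : L (w t) = (1 / (N:ℝ)) * ∑ i, ℓ ⟪w t, x i⟫ := hLdef _
      have hcoef : H₀ * (σmax ^ 2 * ‖q‖ ^ 2) / (N:ℝ) / 2 = (Kc / 2) * ‖q‖ ^ 2 := by
        rw [hKc]; ring
      have hLτ : L (w t + τs • q) ≤ L (w t) + τs * ⟪g, q⟫ + (Kc / 2) * ‖q‖ ^ 2 * τs ^ 2 := by
        rw [hLτeq, hLaeq, hGq]
        calc (1 / (N:ℝ)) * ∑ i, ℓ (⟪w t, x i⟫ + τs * ⟪q, x i⟫)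
            ≤ (1 / (N:ℝ)) * ∑ i, ℓ ⟪w t, x i⟫
              + τs * ((1 / (N:ℝ)) * ∑ i, ℓ' ⟪w t, x i⟫ * ⟪q, x i⟫)
              + (H₀ * (σmax ^ 2 * ‖q‖ ^ 2) / (N:ℝ) / 2) * τs ^ 2 := hdesc
          _ = (1 / (N:ℝ)) * ∑ i, ℓ ⟪w t, x i⟫
              + τs * ((1 / (N:ℝ)) * ∑ i, ℓ' ⟪w t, x i⟫ * ⟪q, x i⟫)
              + (Kc / 2) * ‖q‖ ^ 2 * τs ^ 2 := by rw [hcoef]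
      have hLa_le : L (w t) ≤ L (w 1) := by
        have h0 : 0 ≤ cc * ‖p‖ ^ 2 := by positivity
        rw [hΦt] at hΦle
        linarith only [hΦle, h0]
      rcases eq_or_lt_of_le hτs0 with hzero | hpos
      · -- τs = 0 : boundary case
        have hkey : ∃ i, (⟪w t, x i⟫ : ℝ) ≤ s₀ ∧ (⟪q, x i⟫ : ℝ) < 0 := by
          by_contra hno
          push_neg at hno
          obtain ⟨δf, hδf⟩ : ∃ F : Fin N → ℝ, F = fun i =>
              if 0 ≤ (⟪q, x i⟫ : ℝ) then 1
              else (⟪w t, x i⟫ - s₀) / (|(⟪q, x i⟫ : ℝ)| + 1) := ⟨_, rfl⟩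
          have hδfpos : ∀ i, 0 < δf i := by
            intro i
            by_cases hBi : 0 ≤ (⟪q, x i⟫ : ℝ)
            · simp only [hδf, if_pos hBi]
              norm_num
            · have hAi : s₀ < ⟪w t, x i⟫ := by
                by_contra hAc
                push_neg at hAc
                exact hBi (hno i hAc)
              simp only [hδf, if_neg hBi]
              exact div_pos (by linarith only [hAi]) (by positivity)
          have hgood : ∀ i, ∀ τ : ℝ, 0 ≤ τ → τ < δf i →
              s₀ ≤ ⟪w t, x i⟫ + τ * ⟪q, x i⟫ := by
            intro i τ hτ0 hτδ
            by_cases hBi : 0 ≤ (⟪q, x i⟫ : ℝ)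
            · have hmi := hmarg i
              nlinarith only [hmi, hτ0, hBi]
            · push_neg at hBi
              have hAi : s₀ < ⟪w t, x i⟫ := by
                by_contra hAc
                push_neg at hAc
                exact absurd (hno i hAc) (not_le.mpr hBi)
              have hδfi : δf i = (⟪w t, x i⟫ - s₀) / (|(⟪q, x i⟫ : ℝ)| + 1) := by
                simp only [hδf, if_neg (not_le.mpr hBi)]
              rw [hδfi] at hτδ
              have habsB : |(⟪q, x i⟫ : ℝ)| = -(⟪q, x i⟫ : ℝ) := abs_of_neg hBi
              have h1 : τ * (|(⟪q, x i⟫ : ℝ)| + 1) < ⟪w t, x i⟫ - s₀ := by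
                rw [lt_div_iff₀ (by positivity)] at hτδ
                linarith [mul_comm τ (|(⟪q, x i⟫ : ℝ)| + 1)]
              rw [habsB] at h1
              have e : τ * (-(⟪q, x i⟫ : ℝ) + 1) = -(τ * ⟪q, x i⟫) + τ := by ring
              rw [e] at h1
              linarith only [h1, hτ0]
          obtain ⟨δ, hδdef⟩ : ∃ y : ℝ, y = Finset.univ.inf' Finset.univ_nonempty δf :=
            ⟨_, rfl⟩
          have hδpos : 0 < δ := by
            rw [hδdef, Finset.lt_inf'_iff]
            exact fun i _ => hδfpos i
          obtain ⟨τ₂, hτ₂Bad, hτ₂lt⟩ := Real.lt_sInf_add_pos hBadne hδpos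
          obtain ⟨hτ₂m, i₂, hi₂⟩ := hτ₂Bad
          have hτ₂δ : τ₂ < δf i₂ := by
            have h1 : δ ≤ δf i₂ := by
              rw [hδdef]
              exact Finset.inf'_le _ (Finset.mem_univ i₂)
            have h2 : sInf Bad = 0 := by rw [← hτsdef, ← hzero]
            rw [h2, zero_add] at hτ₂lt
            linarith only [h1, hτ₂lt]
          exact absurd (hgood i₂ τ₂ hτ₂m.1 hτ₂δ) (not_le.mpr hi₂)
        obtain ⟨i₀, hAi₀, hBi₀⟩ := hkey
        have hAeq : (⟪w t, x i₀⟫ : ℝ) = s₀ := le_antisymm hAi₀ (hmarg i₀)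
        have hNLw1 : (N:ℝ) * L (w 1) = ℓ s₀ := hs₀.symm
        have h1 : ℓ s₀ ≤ (N:ℝ) * L (w t) := by
          rw [hNL, ← hAeq]
          exact Finset.single_le_sum (f := fun j => ℓ ⟪w t, x j⟫)
            (fun j _ => (hℓpos _).le) (Finset.mem_univ i₀)
        have h2 : (N:ℝ) * L (w t) + (N:ℝ) * (cc * ‖p‖ ^ 2) ≤ ℓ s₀ := by
          rw [hΦt] at hΦle
          have hmul := mul_le_mul_of_nonneg_left hΦle hNR.le
          rw [mul_add] at hmul
          linarith only [hmul, hNLw1]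
        have hccp : cc * ‖p‖ ^ 2 = 0 := by
          have hle : (N:ℝ) * (cc * ‖p‖ ^ 2) ≤ 0 := by linarith only [h1, h2]
          have hge : 0 ≤ cc * ‖p‖ ^ 2 := by positivity
          nlinarith only [hle, hge, hNR]
        have hLwt : (N:ℝ) * L (w t) = ℓ s₀ := by
          have h0 : (N:ℝ) * (cc * ‖p‖ ^ 2) = 0 := by rw [hccp, mul_zero]
          linarith only [h1, h2, h0]
        have hsplit : ∑ j, ℓ ⟪w t, x j⟫
            = ℓ ⟪w t, x i₀⟫ + ∑ j ∈ Finset.univ.erase i₀, ℓ ⟪w t, x j⟫ :=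
          (Finset.add_sum_erase _ _ (Finset.mem_univ i₀)).symm
        have hsum0 : ∑ j ∈ Finset.univ.erase i₀, ℓ ⟪w t, x j⟫ ≤ 0 := by
          have := hNL (w t)
          rw [hsplit, hAeq] at this
          linarith only [hLwt, this]
        have huniq : ∀ j : Fin N, j = i₀ := by
          intro j
          by_contra hj
          have hjm : j ∈ Finset.univ.erase i₀ := Finset.mem_erase.mpr ⟨hj, Finset.mem_univ j⟩
          have hle : ℓ ⟪w t, x j⟫ ≤ ∑ k ∈ Finset.univ.erase i₀, ℓ ⟪w t, x k⟫ :=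
            Finset.single_le_sum (f := fun k => ℓ ⟪w t, x k⟫)
              (fun k _ => (hℓpos _).le) hjm
          linarith only [hℓpos (⟪w t, x j⟫ : ℝ), hle, hsum0]
        have hβp : β • p = (0 : EuclideanSpace ℝ (Fin d)) := by
          rcases mul_eq_zero.mp hccp with hc0 | hp0
          · have hβ0' : β = 0 := by
              have : β = cc * (2 * αr) := by rw [hcc]; field_simp
              rw [this, hc0, zero_mul]
            rw [hβ0', zero_smul]
          · have : p = 0 := by
              have : ‖p‖ = 0 := by nlinarith only [norm_nonneg p, hp0]
              exact norm_eq_zero.mp this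
            rw [this, smul_zero]
        have hqg : q = -(αr • g) := by rw [hq, hβp, zero_sub]
        have hB0 : (⟪q, x i₀⟫ : ℝ) = -(αr * ⟪g, x i₀⟫) := by
          rw [hqg, inner_neg_left, real_inner_smul_left]
        have hgx : (⟪g, x i₀⟫ : ℝ) = (1 / (N:ℝ)) * ∑ j, ℓ' ⟪w t, x j⟫ * ⟪x i₀, x j⟫ := by
          rw [hgdef]
          exact hginner (w t) (x i₀)
        have hsum1 : ∑ j, ℓ' ⟪w t, x j⟫ * ⟪x i₀, x j⟫ = (N:ℝ) * (ℓ' s₀ * ‖x i₀‖ ^ 2) := by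
          have hterm : ∀ j : Fin N, ℓ' ⟪w t, x j⟫ * ⟪x i₀, x j⟫ = ℓ' s₀ * ‖x i₀‖ ^ 2 := by
            intro j
            rw [huniq j, hAeq, real_inner_self_eq_norm_sq]
          rw [Finset.sum_congr rfl (fun j _ => hterm j), Finset.sum_const,
            Finset.card_univ, Fintype.card_fin, nsmul_eq_mul]
        have hxne : x i₀ ≠ 0 := by
          obtain ⟨u, hu⟩ := hsep
          intro h0
          have := hu i₀
          rw [h0, inner_zero_right] at this
          exact lt_irrefl 0 this
        have hxpos : 0 < ‖x i₀‖ ^ 2 := by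
          have : 0 < ‖x i₀‖ := norm_pos_iff.mpr hxne
          positivity
        have hBpos : 0 < (⟪q, x i₀⟫ : ℝ) := by
          rw [hB0, hgx, hsum1]
          have he : (1 / (N:ℝ)) * ((N:ℝ) * (ℓ' s₀ * ‖x i₀‖ ^ 2)) = ℓ' s₀ * ‖x i₀‖ ^ 2 := by
            field_simp
          rw [he]
          nlinarith only [mul_pos hαpos (mul_pos (neg_pos.mpr (hℓ'neg s₀)) hxpos)]
        linarith only [hBpos, hBi₀]
      · -- τs > 0 : strict decrease case
        have hquad : L (w t) + τs * ⟪g, q⟫ + (Kc / 2) * ‖q‖ ^ 2 * τs ^ 2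
            ≤ L (w t) + τs * (⟪g, q⟫ + (Kc / 2) * ‖q‖ ^ 2) := by
          have ht2 : 0 ≤ τs - τs ^ 2 := by
            nlinarith only [mul_nonneg hpos.le (sub_nonneg.mpr hτs1)]
          have hcoefpos : 0 ≤ (Kc / 2) * ‖q‖ ^ 2 := by positivity
          have hprod := mul_nonneg hcoefpos ht2
          nlinarith only [hprod]
        have hstrict : (N:ℝ) * L (w t + τs • q) < ℓ s₀ := by
          have h1 : L (w t + τs • q) ≤ L (w t) + τs * (⟪g, q⟫ + (Kc / 2) * ‖q‖ ^ 2) := by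
            linarith only [hLτ, hquad]
          have h2 : ⟪g, q⟫ + (Kc / 2) * ‖q‖ ^ 2 ≤ cc * ‖p‖ ^ 2 - (ρ + cc) * ‖q‖ ^ 2 := hX
          have h3 : L (w t + τs • q) ≤ L (w t) + τs * (cc * ‖p‖ ^ 2) - τs * ((ρ + cc) * ‖q‖ ^ 2) := by
            have h2' := mul_le_mul_of_nonneg_left h2 hpos.le
            have e : τs * (cc * ‖p‖ ^ 2 - (ρ + cc) * ‖q‖ ^ 2)
                = τs * (cc * ‖p‖ ^ 2) - τs * ((ρ + cc) * ‖q‖ ^ 2) := by ring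
            rw [e] at h2'
            linarith only [h1, h2']
          have h4 : L (w t) + τs * (cc * ‖p‖ ^ 2) ≤ L (w 1) := by
            rw [hΦt] at hΦle
            have hccP : 0 ≤ cc * ‖p‖ ^ 2 := by positivity
            have hm2 := mul_le_mul_of_nonneg_right hτs1 hccP
            rw [one_mul] at hm2
            linarith only [hΦle, hm2]
          have h5 : 0 < τs * ((ρ + cc) * ‖q‖ ^ 2) := by
            apply mul_pos hpos
            apply mul_pos _ hQpos
            linarith only [hρpos, hcc0]
          have h6 : L (w t + τs • q) < L (w 1) := by linarith only [h3, h4, h5]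
          have hNLw1 : (N:ℝ) * L (w 1) = ℓ s₀ := hs₀.symm
          have hmul := (mul_lt_mul_iff_right₀ hNR).mpr h6
          linarith only [hmul, hNLw1]
        have hstrictmar := hsubs _ hstrict
        have hmarτs : ∀ i, s₀ < ⟪w t, x i⟫ + τs * ⟪q, x i⟫ := by
          intro i
          have := hstrictmar i
          rwa [inner_add_left, real_inner_smul_left] at this
        obtain ⟨ε₀, hε₀def⟩ : ∃ y : ℝ, y = Finset.univ.inf' Finset.univ_nonempty
            (fun i => ⟪w t, x i⟫ + τs * ⟪q, x i⟫ - s₀) := ⟨_, rfl⟩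
        have hε₀pos : 0 < ε₀ := by
          rw [hε₀def, Finset.lt_inf'_iff]
          intro i _
          linarith only [hmarτs i]
        obtain ⟨M, hMdef⟩ : ∃ y : ℝ, y = Finset.univ.sup' Finset.univ_nonempty
            (fun i => |(⟪q, x i⟫ : ℝ)|) := ⟨_, rfl⟩
        have hM0 : 0 ≤ M := by
          have i := Classical.arbitrary (Fin N)
          rw [hMdef]
          calc (0:ℝ) ≤ |(⟪q, x i⟫ : ℝ)| := abs_nonneg _
            _ ≤ _ := Finset.le_sup' (fun j => |(⟪q, x j⟫ : ℝ)|) (Finset.mem_univ i)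
        have hδpos : 0 < ε₀ / (M + 1) := by positivity
        obtain ⟨τ₂, hτ₂Bad, hτ₂lt⟩ := Real.lt_sInf_add_pos hBadne hδpos
        obtain ⟨hτ₂m, i₂, hi₂⟩ := hτ₂Bad
        have h1 : τs ≤ τ₂ := by
          have := csInf_le hBadbdd (Set.mem_setOf.mpr ⟨hτ₂m, i₂, hi₂⟩)
          rwa [← hτsdef] at this
        have h2 : ε₀ ≤ ⟪w t, x i₂⟫ + τs * ⟪q, x i₂⟫ - s₀ := by
          rw [hε₀def]
          exact Finset.inf'_le _ (Finset.mem_univ i₂)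
        have h3 : |(⟪q, x i₂⟫ : ℝ)| ≤ M := by
          rw [hMdef]
          exact Finset.le_sup' (fun j => |(⟪q, x j⟫ : ℝ)|) (Finset.mem_univ i₂)
        have hτ₂τs : τ₂ - τs < ε₀ / (M + 1) := by
          rw [← hτsdef] at hτ₂lt
          linarith only [hτ₂lt]
        have h4 : (τ₂ - τs) * ⟪q, x i₂⟫ ≥ -((ε₀ / (M + 1)) * M) := by
          have ha : (τ₂ - τs) * ⟪q, x i₂⟫ ≥ -((τ₂ - τs) * |(⟪q, x i₂⟫ : ℝ)|) := by
            rw [ge_iff_le, neg_le]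
            calc -((τ₂ - τs) * ⟪q, x i₂⟫) = (τ₂ - τs) * (-(⟪q, x i₂⟫ : ℝ)) := by ring
              _ ≤ (τ₂ - τs) * |(⟪q, x i₂⟫ : ℝ)| :=
                  mul_le_mul_of_nonneg_left (neg_le_abs _) (by linarith only [h1])
          have hb : (τ₂ - τs) * |(⟪q, x i₂⟫ : ℝ)| ≤ (ε₀ / (M + 1)) * M := by
            calc (τ₂ - τs) * |(⟪q, x i₂⟫ : ℝ)| ≤ (ε₀ / (M + 1)) * |(⟪q, x i₂⟫ : ℝ)| := by
                  apply mul_le_mul_of_nonneg_right (le_of_lt hτ₂τs) (abs_nonneg _)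
              _ ≤ (ε₀ / (M + 1)) * M := by
                  apply mul_le_mul_of_nonneg_left h3 (le_of_lt hδpos)
          linarith only [ha, hb]
        have h5 : (ε₀ / (M + 1)) * M < ε₀ := by
          rw [div_mul_eq_mul_div, div_lt_iff₀ (by positivity)]
          nlinarith only [hε₀pos]
        have hexp : (⟪w t, x i₂⟫ : ℝ) + τ₂ * ⟪q, x i₂⟫
            = (⟪w t, x i₂⟫ + τs * ⟪q, x i₂⟫) + (τ₂ - τs) * ⟪q, x i₂⟫ := by ring
        rw [hexp] at hi₂
        linarith only [hi₂, h2, h4, h5]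
    -- apply descent with τ₀ = 1 and conclude
    have hmar1 : ∀ τ ∈ Set.Icc (0:ℝ) 1, ∀ i,
        s₀ ≤ (fun j => (⟪w t, x j⟫ : ℝ)) i + τ * (fun j => (⟪q, x j⟫ : ℝ)) i := by
      intro τ hτ i
      exact hseg τ hτ i
    have hdesc := descent_scalar ℓ ℓ' hdiff s₀ H₀ hH₀pos hH₀
      (fun j => (⟪w t, x j⟫ : ℝ)) (fun j => (⟪q, x j⟫ : ℝ))
      (σmax ^ 2 * ‖q‖ ^ 2) (hsum_sq q) 1 zero_le_one hmar1
    have hwteq : w t + (1:ℝ) • q = w (t + 1) := by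
      rw [one_smul, hqdef]
      abel
    have hL1eq : L (w (t + 1)) = (1 / (N:ℝ)) * ∑ i, ℓ (⟪w t, x i⟫ + 1 * ⟪q, x i⟫) := by
      rw [← hwteq, hLdef]
      congr 1
      apply Finset.sum_congr rfl
      intro i _
      congr 1
      rw [inner_add_left, real_inner_smul_left]
    have hcoef : H₀ * (σmax ^ 2 * ‖q‖ ^ 2) / (N:ℝ) / 2 * (1:ℝ) ^ 2 = (Kc / 2) * ‖q‖ ^ 2 := by
      rw [hKc]; ring
    have hL1 : L (w (t + 1)) ≤ L (w t) + ⟪g, q⟫ + (Kc / 2) * ‖q‖ ^ 2 := by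
      rw [hL1eq, hLdef (w t)]
      calc (1 / (N:ℝ)) * ∑ i, ℓ (⟪w t, x i⟫ + 1 * ⟪q, x i⟫)
          ≤ (1 / (N:ℝ)) * ∑ i, ℓ ⟪w t, x i⟫
            + 1 * ((1 / (N:ℝ)) * ∑ i, ℓ' ⟪w t, x i⟫ * ⟪q, x i⟫)
            + H₀ * (σmax ^ 2 * ‖q‖ ^ 2) / (N:ℝ) / 2 * (1:ℝ) ^ 2 := hdesc
        _ = (1 / (N:ℝ)) * ∑ i, ℓ ⟪w t, x i⟫ + ⟪g, q⟫ + (Kc / 2) * ‖q‖ ^ 2 := by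
            rw [hcoef, hGq]; ring
    rw [hΦt1, hDt, hΦt]
    linarith only [hL1, hX]

  have hw10 : w 1 - w 0 = 0 := by rw [hw0, sub_self]
  have hΦ1 : Φ 1 = L (w 1) := by
    simp only [hΦ, Nat.sub_self]
    rw [hw10, norm_zero]
    ring
  have hΦ0 : Φ 0 = L (w 1) := by
    simp only [hΦ, Nat.zero_sub]
    rw [sub_self, norm_zero, hw0]
    ring
  have hInv : ∀ t : ℕ, 1 ≤ t → (∀ i, s₀ ≤ ⟪w t, x i⟫) ∧ Φ t ≤ L (w 1) := by
    intro t ht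
    induction t, ht using Nat.le_induction with
    | base =>
      refine ⟨?_, le_of_eq hΦ1⟩
      apply hsub
      rw [hs₀]
    | succ n hn ih =>
      have hdec := hstep n hn ih.1 ih.2
      have hD0 : 0 ≤ D n := by simp only [hD]; positivity
      have hρD : 0 ≤ ρ * D n := mul_nonneg hρpos.le hD0
      have hΦn1 : Φ (n + 1) ≤ L (w 1) := by linarith only [hdec, ih.2, hρD]
      refine ⟨?_, hΦn1⟩
      apply hsub
      have hL : L (w (n + 1)) ≤ Φ (n + 1) := by
        simp only [hΦ]
        have h0 : 0 ≤ cc * ‖w (n + 1) - w (n + 1 - 1)‖ ^ 2 := by positivity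
        linarith only [h0]
      have hLle : L (w (n + 1)) ≤ L (w 1) := le_trans hL hΦn1
      rw [hs₀]
      exact mul_le_mul_of_nonneg_left hLle hNR.le
  have hdecAll : ∀ t : ℕ, Φ (t + 1) + ρ * D t ≤ Φ t := by
    intro t
    rcases Nat.eq_zero_or_pos t with h0 | h1
    · subst h0
      have hD0 : D 0 = 0 := by
        simp only [hD, zero_add]
        rw [hw10, norm_zero]
        norm_num
      rw [hD0, hΦ0, hΦ1, mul_zero, add_zero]
    · exact hstep t h1 (hInv t h1).1 (hInv t h1).2
  have hΦnonneg : ∀ t, 0 ≤ Φ t := by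
    intro t
    simp only [hΦ]
    have h1 := hLpos (w t)
    have h2 : 0 ≤ cc * ‖w t - w (t - 1)‖ ^ 2 := by positivity
    linarith only [h1, h2]
  have hpartial : ∀ T : ℕ, ρ * ∑ t ∈ Finset.range T, D t + Φ T ≤ Φ 0 := by
    intro T
    induction T with
    | zero => simp
    | succ n ihn =>
      rw [Finset.sum_range_succ, mul_add]
      have := hdecAll n
      linarith only [ihn, this]
  have hDnonneg : ∀ n, 0 ≤ D n := by
    intro n
    simp only [hD]
    positivity
  have hDsum : Summable D := by
    apply summable_of_sum_range_le (c := Φ 0 / ρ) hDnonneg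
    intro n
    have h := hpartial n
    have h2 := hΦnonneg n
    rw [le_div_iff₀ hρpos]
    nlinarith only [h, h2]
  have hDsh : Summable (fun t => D (t + 1)) := (summable_nat_add_iff 1).mpr hDsum
  have hgb : ∀ t : ℕ, ‖gradL (w (t + 1))‖ ^ 2
      ≤ (2 * β ^ 2 / αr ^ 2) * D t + (2 / αr ^ 2) * D (t + 1) := by
    intro t
    have h1 : w (t + 1 + 1) - w (t + 1)
        = β • (w (t + 1) - w t) - αr • gradL (w (t + 1)) := by
      have := hqrel (t + 1) (by omega)
      simpa using this
    have h2 : αr • gradL (w (t + 1))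
        = β • (w (t + 1) - w t) - (w (t + 1 + 1) - w (t + 1)) := by
      rw [h1]
      abel
    have h3 : ‖αr • gradL (w (t + 1))‖
        ≤ β * ‖w (t + 1) - w t‖ + ‖w (t + 1 + 1) - w (t + 1)‖ := by
      rw [h2]
      calc ‖β • (w (t + 1) - w t) - (w (t + 1 + 1) - w (t + 1))‖
          ≤ ‖β • (w (t + 1) - w t)‖ + ‖w (t + 1 + 1) - w (t + 1)‖ := norm_sub_le _ _
        _ = β * ‖w (t + 1) - w t‖ + ‖w (t + 1 + 1) - w (t + 1)‖ := by
            rw [norm_smul, Real.norm_eq_abs, abs_of_nonneg hβ0]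
    have h4 : ‖αr • gradL (w (t + 1))‖ = αr * ‖gradL (w (t + 1))‖ := by
      rw [norm_smul, Real.norm_eq_abs, abs_of_nonneg hαpos.le]
    rw [h4] at h3
    have h5 : (αr * ‖gradL (w (t + 1))‖) ^ 2
        ≤ (β * ‖w (t + 1) - w t‖ + ‖w (t + 1 + 1) - w (t + 1)‖) ^ 2 := by
      apply pow_le_pow_left₀ (by positivity) h3
    have h6 : (β * ‖w (t + 1) - w t‖ + ‖w (t + 1 + 1) - w (t + 1)‖) ^ 2
        ≤ 2 * β ^ 2 * ‖w (t + 1) - w t‖ ^ 2 + 2 * ‖w (t + 1 + 1) - w (t + 1)‖ ^ 2 := by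
      nlinarith only [sq_nonneg (β * ‖w (t + 1) - w t‖ - ‖w (t + 1 + 1) - w (t + 1)‖)]
    have hDt : D t = ‖w (t + 1) - w t‖ ^ 2 := by simp only [hD]
    have hDt1 : D (t + 1) = ‖w (t + 1 + 1) - w (t + 1)‖ ^ 2 := by simp only [hD]
    have h7 : αr ^ 2 * ‖gradL (w (t + 1))‖ ^ 2 ≤ 2 * β ^ 2 * D t + 2 * D (t + 1) := by
      rw [hDt, hDt1]
      nlinarith only [h5, h6]
    have hα2 : 0 < αr ^ 2 := by positivity
    have h8 : (2 * β ^ 2 / αr ^ 2) * D t + (2 / αr ^ 2) * D (t + 1)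
        = (2 * β ^ 2 * D t + 2 * D (t + 1)) / αr ^ 2 := by
      field_simp
    rw [h8, le_div_iff₀ hα2]
    nlinarith only [h7]
  have hFsum : Summable (fun t : ℕ =>
      (2 * β ^ 2 / αr ^ 2) * D t + (2 / αr ^ 2) * D (t + 1)) :=
    (hDsum.mul_left _).add (hDsh.mul_left _)
  exact Summable.of_nonneg_of_le (fun t => sq_nonneg _) hgb hFsum
end

section
/- For the GDM iterates with any learning rate η > 0 and momentum β ∈ [0,1), assuming ℓ'(s) < 0 for all s ∈ ℝ, every step is at least a fixed multiple of the current gradient norm: for all t ≥ 1, ‖w(t+1) − w(t)‖ ≥ (η·γ·(1−β)/σ_max)·‖∇L(w(t))‖. -/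
open Filter Topology RealInnerProductSpace MeasureTheory

set_option linter.unusedVariables false

theorem stmt5
    {d N : ℕ} (hN : 1 ≤ N)
    (x : Fin N → EuclideanSpace ℝ (Fin d))
    (ℓ ℓ' : ℝ → ℝ)
    (hdiff : ∀ s : ℝ, HasDerivAt ℓ (ℓ' s) s)
    (L : EuclideanSpace ℝ (Fin d) → ℝ)
    (hLdef : ∀ w : EuclideanSpace ℝ (Fin d), L w = (1 / (N : ℝ)) * ∑ i, ℓ ⟪w, x i⟫)
    (gradL : EuclideanSpace ℝ (Fin d) → EuclideanSpace ℝ (Fin d))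
    (hgraddef : ∀ w : EuclideanSpace ℝ (Fin d),
      gradL w = (1 / (N : ℝ)) • ∑ i, ℓ' ⟪w, x i⟫ • x i)
    (σmax : ℝ) (hσpos : 0 < σmax)
    (hσ : ∀ c : Fin N → ℝ, ‖∑ i, c i • x i‖ ≤ σmax * Real.sqrt (∑ i, (c i) ^ 2))
    (wmax : EuclideanSpace ℝ (Fin d))
    (hwmax : ∀ i, 1 ≤ ⟪wmax, x i⟫)
    (hwmaxmin : ∀ v : EuclideanSpace ℝ (Fin d), (∀ i, 1 ≤ ⟪v, x i⟫) → ‖wmax‖ ≤ ‖v‖)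
    (hℓ'neg : ∀ s : ℝ, ℓ' s < 0)
    (η β : ℝ) (hη : 0 < η) (hβ0 : 0 ≤ β) (hβ1 : β < 1)
    (w m : ℕ → EuclideanSpace ℝ (Fin d))
    (hm0 : m 0 = 0) (hw0 : w 0 = w 1)
    (hmrec : ∀ t : ℕ, 1 ≤ t → m t = β • m (t - 1) + (1 - β) • gradL (w t))
    (hwrec : ∀ t : ℕ, 1 ≤ t → w (t + 1) = w t - η • m t)
    :
    ∀ t : ℕ, 1 ≤ t →
      (η * ‖wmax‖⁻¹ * (1 - β) / σmax) * ‖gradL (w t)‖ ≤ ‖w (t + 1) - w t‖ := by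
  have hNpos : (0:ℝ) < N := by exact_mod_cast hN
  have hwpos : (0:ℝ) < ‖wmax‖ := by
    rcases eq_or_ne wmax 0 with h | h
    · exfalso
      have h0 := hwmax ⟨0, hN⟩
      rw [h] at h0
      simp [inner_zero_left] at h0
      linarith
    · exact norm_pos_iff.mpr h
  -- key bound: ‖gradL v‖ ≤ σmax * (-⟪wmax, gradL v⟫)
  have keyB : ∀ v : EuclideanSpace ℝ (Fin d), ‖gradL v‖ ≤ σmax * (-⟪wmax, gradL v⟫) := by
    intro v
    set c : Fin N → ℝ := fun i => ℓ' ⟪v, x i⟫ with hc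
    have hcneg : ∀ i, c i < 0 := fun i => hℓ'neg _
    have hsqrt : Real.sqrt (∑ i, c i ^ 2) ≤ ∑ i, (-(c i)) := by
      have hsum : (∑ i, c i ^ 2) ≤ (∑ i, (-(c i))) ^ 2 := by
        have h1 : (∑ i, c i ^ 2) = ∑ i, (-(c i)) ^ 2 := by
          congr 1; funext i; ring
        rw [h1]
        exact Finset.sum_sq_le_sq_sum_of_nonneg (fun i _ => by linarith [hcneg i])
      calc Real.sqrt (∑ i, c i ^ 2) ≤ Real.sqrt ((∑ i, (-(c i))) ^ 2) :=
            Real.sqrt_le_sqrt hsum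
        _ = ∑ i, (-(c i)) := by
            rw [Real.sqrt_sq]
            exact Finset.sum_nonneg (fun i _ => by linarith [hcneg i])
    have hnorm : ‖gradL v‖ ≤ (1/(N:ℝ)) * (σmax * (∑ i, (-(c i)))) := by
      rw [hgraddef, norm_smul]
      have : ‖(1:ℝ)/(N:ℝ)‖ = 1/(N:ℝ) := by
        rw [Real.norm_eq_abs, abs_of_pos (by positivity)]
      rw [this]
      have h2 : ‖∑ i, c i • x i‖ ≤ σmax * (∑ i, (-(c i))) :=
        le_trans (hσ c) (mul_le_mul_of_nonneg_left hsqrt (le_of_lt hσpos))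
      exact mul_le_mul_of_nonneg_left h2 (by positivity)
    have hinner : (1/(N:ℝ)) * (∑ i, (-(c i))) ≤ -⟪wmax, gradL v⟫ := by
      have h3 : ⟪wmax, gradL v⟫ = (1/(N:ℝ)) * ∑ i, c i * ⟪wmax, x i⟫ := by
        rw [hgraddef, real_inner_smul_right, inner_sum]
        congr 1
        exact Finset.sum_congr rfl fun i _ => real_inner_smul_right _ _ _
      rw [h3]
      rw [← mul_neg, ← Finset.sum_neg_distrib]
      apply mul_le_mul_of_nonneg_left _ (by positivity)
      apply Finset.sum_le_sum
      intro i _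
      have := hwmax i
      nlinarith [hcneg i]
    nlinarith [mul_le_mul_of_nonneg_left hinner (le_of_lt hσpos)]
  have hgradnn : ∀ v : EuclideanSpace ℝ (Fin d), 0 ≤ -⟪wmax, gradL v⟫ := by
    intro v
    have := keyB v
    nlinarith [norm_nonneg (gradL v)]
  -- m t has nonnegative "negative correlation" with wmax
  have hmnn : ∀ t, 0 ≤ -⟪wmax, m t⟫ := by
    intro t
    induction t with
    | zero => simp [hm0]
    | succ n ih =>
      rw [hmrec (n+1) (Nat.le_add_left 1 n)]
      simp only [Nat.add_sub_cancel, inner_add_right, real_inner_smul_right]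
      have := hgradnn (w (n+1))
      nlinarith
  intro t ht
  rw [hwrec t ht]
  have hws : w t - η • m t - w t = -(η • m t) := by abel
  rw [hws, norm_neg, norm_smul, Real.norm_eq_abs, abs_of_pos hη]
  have hinner : (1 - β) * (-⟪wmax, gradL (w t)⟫) ≤ -⟪wmax, m t⟫ := by
    rw [hmrec t ht]
    simp only [inner_add_right, real_inner_smul_right]
    nlinarith [hmnn (t-1)]
  have hcs : -⟪wmax, m t⟫ ≤ ‖wmax‖ * ‖m t‖ := by
    have h := abs_real_inner_le_norm wmax (m t)
    have := neg_abs_le ⟪wmax, m t⟫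
    linarith
  have key : (1 - β) * ‖gradL (w t)‖ ≤ σmax * (‖wmax‖ * ‖m t‖) := by
    have h1 := keyB (w t)
    nlinarith
  rw [div_mul_eq_mul_div, div_le_iff₀ hσpos]
  have h1 : η * ‖wmax‖⁻¹ * ((1 - β) * ‖gradL (w t)‖) ≤
      η * ‖wmax‖⁻¹ * (σmax * (‖wmax‖ * ‖m t‖)) :=
    mul_le_mul_of_nonneg_left key (by positivity)
  have h2 : η * ‖wmax‖⁻¹ * (σmax * (‖wmax‖ * ‖m t‖)) = η * ‖m t‖ * σmax := by
    field_simp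
  rw [h2] at h1
  linarith
end

section
/- Under the stated GDM conditions, the gradients vanish and all margins diverge along the trajectory: lim_{t→∞} ‖∇L(w(t))‖ = 0, and for every index i, ⟪w(t), x i⟫ → +∞ as t → ∞. -/
open Filter Topology RealInnerProductSpace MeasureTheory

set_option linter.unusedVariables false
set_option maxHeartbeats 4000000

theorem stmt6
    {d N : ℕ} (hN : 1 ≤ N)
    (x : Fin N → EuclideanSpace ℝ (Fin d))
    (ℓ ℓ' : ℝ → ℝ)
    (hdiff : ∀ s : ℝ, HasDerivAt ℓ (ℓ' s) s)
    (L : EuclideanSpace ℝ (Fin d) → ℝ)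
    (hLdef : ∀ w : EuclideanSpace ℝ (Fin d), L w = (1 / (N : ℝ)) * ∑ i, ℓ ⟪w, x i⟫)
    (gradL : EuclideanSpace ℝ (Fin d) → EuclideanSpace ℝ (Fin d))
    (hgraddef : ∀ w : EuclideanSpace ℝ (Fin d),
      gradL w = (1 / (N : ℝ)) • ∑ i, ℓ' ⟪w, x i⟫ • x i)
    (hsep : ∃ u : EuclideanSpace ℝ (Fin d), ∀ i, 0 < ⟪u, x i⟫)
    (σmax : ℝ) (hσpos : 0 < σmax)
    (hσ : ∀ c : Fin N → ℝ, ‖∑ i, c i • x i‖ ≤ σmax * Real.sqrt (∑ i, (c i) ^ 2))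
    (wmax : EuclideanSpace ℝ (Fin d))
    (hwmax : ∀ i, 1 ≤ ⟪wmax, x i⟫)
    (hwmaxmin : ∀ v : EuclideanSpace ℝ (Fin d), (∀ i, 1 ≤ ⟪v, x i⟫) → ‖wmax‖ ≤ ‖v‖)
    (hℓpos : ∀ s : ℝ, 0 < ℓ s) (hℓ'neg : ∀ s : ℝ, ℓ' s < 0)
    (hℓtop : Tendsto ℓ atTop (𝓝 0))
    (hℓ'top : Tendsto ℓ' atTop (𝓝 0))
    (hℓ'bot : Filter.limsup ℓ' atBot < 0)
    (μp μm xp xm : ℝ) (hμp : 0 < μp) (hμm : 0 < μm)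
    (htailp : ∀ s : ℝ, xp < s → -ℓ' s ≤ (1 + Real.exp (-μp * s)) * Real.exp (-s))
    (htailm : ∀ s : ℝ, xm < s → (1 - Real.exp (-μm * s)) * Real.exp (-s) ≤ -ℓ' s)
    (hloc : ∀ s : ℝ, ∃ H : ℝ, 0 < H ∧
      ∀ a b : ℝ, s ≤ a → s ≤ b → |ℓ' a - ℓ' b| ≤ H * |a - b|)
    (η β : ℝ) (hη : 0 < η) (hβ0 : 0 ≤ β) (hβ1 : β < 1)
    (w m : ℕ → EuclideanSpace ℝ (Fin d))
    (hm0 : m 0 = 0) (hw0 : w 0 = w 1)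
    (hmrec : ∀ t : ℕ, 1 ≤ t → m t = β • m (t - 1) + (1 - β) • gradL (w t))
    (hwrec : ∀ t : ℕ, 1 ≤ t → w (t + 1) = w t - η • m t)
    (s₀ H₀ : ℝ) (hs₀ : ℓ s₀ = N * L (w 1)) (hH₀pos : 0 < H₀)
    (hH₀ : ∀ a b : ℝ, s₀ ≤ a → s₀ ≤ b → |ℓ' a - ℓ' b| ≤ H₀ * |a - b|)
    (hηlt : η < 2 * N / (σmax ^ 2 * H₀))
    :
    Tendsto (fun t : ℕ => ‖gradL (w t)‖) atTop (𝓝 0) ∧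
    ∀ i : Fin N, Tendsto (fun t : ℕ => ⟪w t, x i⟫) atTop atTop := by
  classical
  obtain ⟨u, hu⟩ := hsep
  have hNR : (0:ℝ) < N := by exact_mod_cast Nat.lt_of_lt_of_le Nat.zero_lt_one hN
  have hβ' : (0:ℝ) < 1 - β := by linarith
  obtain ⟨H, hHdef⟩ : ∃ H : ℝ, H = σmax ^ 2 * H₀ / N := ⟨_, rfl⟩
  have hHpos : 0 < H := by rw [hHdef]; positivity
  have hηH : η * H < 2 := by
    have h1 : 0 < σmax ^ 2 * H₀ := by positivity
    rw [lt_div_iff₀ h1] at hηlt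
    rw [hHdef]
    have h2 : η * (σmax ^ 2 * H₀ / ↑N) = η * (σmax ^ 2 * H₀) / N := by ring
    rw [h2, div_lt_iff₀ hNR]
    linarith
  -- strict antitonicity of ℓ
  have hanti : StrictAnti ℓ := by
    apply strictAnti_of_deriv_neg
    intro s
    rw [(hdiff s).deriv]
    exact hℓ'neg s
  -- basic inner product identities
  have hinner : ∀ (v δ : EuclideanSpace ℝ (Fin d)) (τ : ℝ) (i : Fin N),
      ⟪v + τ • δ, x i⟫ = ⟪v, x i⟫ + τ * ⟪δ, x i⟫ := by
    intro v δ τ i; rw [inner_add_left, real_inner_smul_left]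
  have hgi : ∀ (v δ : EuclideanSpace ℝ (Fin d)),
      ⟪gradL v, δ⟫ = (1/(N:ℝ)) * ∑ i, ℓ' ⟪v, x i⟫ * ⟪δ, x i⟫ := by
    intro v δ
    rw [hgraddef, real_inner_smul_left, sum_inner]
    congr 1
    apply Finset.sum_congr rfl
    intro i _
    rw [real_inner_smul_left, real_inner_comm (x i) δ]
  have hgu : ∀ v : EuclideanSpace ℝ (Fin d),
      ⟪u, gradL v⟫ = (1/(N:ℝ)) * ∑ i, ℓ' ⟪v, x i⟫ * ⟪u, x i⟫ := by
    intro v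
    rw [hgraddef, real_inner_smul_right, inner_sum]
    congr 1
    apply Finset.sum_congr rfl
    intro i _
    rw [real_inner_smul_right]
  -- row bound
  have hrow : ∀ v : EuclideanSpace ℝ (Fin d), ∑ i, ⟪v, x i⟫ ^ 2 ≤ σmax ^ 2 * ‖v‖ ^ 2 := by
    intro v
    have hS0 : (0:ℝ) ≤ ∑ i, ⟪v, x i⟫ ^ 2 := Finset.sum_nonneg fun i _ => sq_nonneg _
    have h1 : ∑ i, ⟪v, x i⟫ ^ 2 = ⟪v, ∑ i, ⟪v, x i⟫ • x i⟫ := by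
      rw [inner_sum]
      apply Finset.sum_congr rfl
      intro i _
      rw [real_inner_smul_right]; ring
    have h2 : ⟪v, ∑ i, ⟪v, x i⟫ • x i⟫ ≤ ‖v‖ * ‖∑ i, ⟪v, x i⟫ • x i‖ :=
      real_inner_le_norm _ _
    have h3 := hσ (fun i => ⟪v, x i⟫)
    have h4 : ∑ i, ⟪v, x i⟫ ^ 2 ≤ ‖v‖ * (σmax * Real.sqrt (∑ i, ⟪v, x i⟫ ^ 2)) := by
      calc ∑ i, ⟪v, x i⟫ ^ 2 = ⟪v, ∑ i, ⟪v, x i⟫ • x i⟫ := h1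
      _ ≤ ‖v‖ * ‖∑ i, ⟪v, x i⟫ • x i‖ := h2
      _ ≤ ‖v‖ * (σmax * Real.sqrt (∑ i, ⟪v, x i⟫ ^ 2)) :=
          mul_le_mul_of_nonneg_left h3 (norm_nonneg v)
    have h5 : Real.sqrt (∑ i, ⟪v, x i⟫ ^ 2) * Real.sqrt (∑ i, ⟪v, x i⟫ ^ 2)
        = ∑ i, ⟪v, x i⟫ ^ 2 := Real.mul_self_sqrt hS0
    rcases eq_or_lt_of_le (Real.sqrt_nonneg (∑ i, ⟪v, x i⟫ ^ 2)) with h6 | h6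
    · have h7 : (∑ i, ⟪v, x i⟫ ^ 2) = 0 := by rw [← h5, ← h6]; ring
      rw [h7]
      positivity
    · have h8 : Real.sqrt (∑ i, ⟪v, x i⟫ ^ 2) * Real.sqrt (∑ i, ⟪v, x i⟫ ^ 2)
          ≤ (σmax * ‖v‖) * Real.sqrt (∑ i, ⟪v, x i⟫ ^ 2) := by
        rw [h5]; linarith [h4]
      have h9 : Real.sqrt (∑ i, ⟪v, x i⟫ ^ 2) ≤ σmax * ‖v‖ :=
        le_of_mul_le_mul_right h8 h6
      nlinarith [Real.sqrt_nonneg (∑ i, ⟪v, x i⟫ ^ 2)]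
  -- derivative of τ ↦ L (v + τ • δ)
  have hφ : ∀ (v δ : EuclideanSpace ℝ (Fin d)) (τ : ℝ),
      HasDerivAt (fun s : ℝ => L (v + s • δ))
        ((1/(N:ℝ)) * ∑ i, ℓ' (⟪v, x i⟫ + τ * ⟪δ, x i⟫) * ⟪δ, x i⟫) τ := by
    intro v δ τ
    have heq : (fun s : ℝ => L (v + s • δ))
        = fun s : ℝ => (1/(N:ℝ)) * ∑ i, ℓ (⟪v, x i⟫ + s * ⟪δ, x i⟫) := by
      funext s
      rw [hLdef]
      congr 1
      apply Finset.sum_congr rfl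
      intro i _
      rw [hinner]
    rw [heq]
    apply HasDerivAt.const_mul
    apply HasDerivAt.fun_sum
    intro i _
    have h1 : HasDerivAt (fun s : ℝ => ⟪v, x i⟫ + s * ⟪δ, x i⟫) (⟪δ, x i⟫) τ :=
      (hasDerivAt_mul_const _).const_add _
    exact (hdiff _).comp τ h1
  -- the descent lemma
  have descent : ∀ (v δ : EuclideanSpace ℝ (Fin d)) (T : ℝ), 0 ≤ T →
      (∀ τ : ℝ, 0 ≤ τ → τ ≤ T → ∀ i, s₀ ≤ ⟪v, x i⟫ + τ * ⟪δ, x i⟫) →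
      L (v + T • δ) ≤ L v + T * ⟪gradL v, δ⟫ + H / 2 * T ^ 2 * ‖δ‖ ^ 2 := by
    intro v δ T hT0 hmarg
    set g : ℝ → ℝ := fun τ => L v + τ * ⟪gradL v, δ⟫ + H/2 * τ^2 * ‖δ‖^2 - L (v + τ • δ)
      with hgdef
    have hg' : ∀ τ : ℝ, HasDerivAt g
        (⟪gradL v, δ⟫ + H * τ * ‖δ‖^2
          - (1/(N:ℝ)) * ∑ i, ℓ' (⟪v, x i⟫ + τ * ⟪δ, x i⟫) * ⟪δ, x i⟫) τ := by
      intro τ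
      have ha : HasDerivAt (fun τ : ℝ => L v + τ * ⟪gradL v, δ⟫) (⟪gradL v, δ⟫) τ :=
        (hasDerivAt_mul_const _).const_add _
      have hb : HasDerivAt (fun τ : ℝ => H/2 * τ^2 * ‖δ‖^2) (H * τ * ‖δ‖^2) τ := by
        have h2 : HasDerivAt (fun τ : ℝ => τ^2) (2*τ) τ := by
          simpa using hasDerivAt_pow 2 τ
        have h3 := (h2.const_mul (H/2)).mul_const (‖δ‖^2)
        rw [show H * τ * ‖δ‖^2 = H/2 * (2*τ) * ‖δ‖^2 by ring]
        exact h3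
      exact (ha.add hb).sub (hφ v δ τ)
    have hkey : ∀ τ : ℝ, 0 ≤ τ → τ ≤ T →
        0 ≤ ⟪gradL v, δ⟫ + H * τ * ‖δ‖^2
          - (1/(N:ℝ)) * ∑ i, ℓ' (⟪v, x i⟫ + τ * ⟪δ, x i⟫) * ⟪δ, x i⟫ := by
      intro τ h0 h1
      rw [hgi]
      have hb2 : ∑ i, ⟪δ, x i⟫ ^ 2 ≤ σmax^2 * ‖δ‖^2 := hrow δ
      have hterm : ∀ i : Fin N,
          -(H₀ * τ * ⟪δ, x i⟫^2) ≤ (ℓ' ⟪v, x i⟫ - ℓ' (⟪v, x i⟫ + τ * ⟪δ, x i⟫)) * ⟪δ, x i⟫ := by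
        intro i
        have hma : s₀ ≤ ⟪v, x i⟫ := by
          have := hmarg 0 le_rfl hT0 i
          simpa using this
        have hmb : s₀ ≤ ⟪v, x i⟫ + τ * ⟪δ, x i⟫ := hmarg τ h0 h1 i
        have habs := hH₀ ⟪v, x i⟫ (⟪v, x i⟫ + τ * ⟪δ, x i⟫) hma hmb
        have he : |⟪v, x i⟫ - (⟪v, x i⟫ + τ * ⟪δ, x i⟫)| = τ * |⟪δ, x i⟫| := by
          rw [show ⟪v, x i⟫ - (⟪v, x i⟫ + τ * ⟪δ, x i⟫) = -(τ * ⟪δ, x i⟫) by ring,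
            abs_neg, abs_mul, abs_of_nonneg h0]
        rw [he] at habs
        have h6 := neg_abs_le ((ℓ' ⟪v, x i⟫ - ℓ' (⟪v, x i⟫ + τ * ⟪δ, x i⟫)) * ⟪δ, x i⟫)
        rw [abs_mul] at h6
        have h7 : H₀ * (τ * |⟪δ, x i⟫|) * |⟪δ, x i⟫| = H₀ * τ * ⟪δ, x i⟫^2 := by
          calc H₀ * (τ * |⟪δ, x i⟫|) * |⟪δ, x i⟫|
              = H₀ * τ * (|⟪δ, x i⟫| * |⟪δ, x i⟫|) := by ring
          _ = H₀ * τ * ⟪δ, x i⟫^2 := by rw [abs_mul_abs_self]; ring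
        linarith [mul_le_mul_of_nonneg_right habs (abs_nonneg ⟪δ, x i⟫), h7]
      have hsumineq : -(H₀ * τ * (σmax^2 * ‖δ‖^2))
          ≤ ∑ i, (ℓ' ⟪v, x i⟫ - ℓ' (⟪v, x i⟫ + τ * ⟪δ, x i⟫)) * ⟪δ, x i⟫ := by
        calc -(H₀ * τ * (σmax^2 * ‖δ‖^2)) ≤ -(H₀ * τ * ∑ i, ⟪δ, x i⟫ ^ 2) := by
              have := mul_le_mul_of_nonneg_left hb2 (mul_nonneg hH₀pos.le h0)
              linarith
        _ = ∑ i, -(H₀ * τ * ⟪δ, x i⟫^2) := by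
              rw [Finset.mul_sum, ← Finset.sum_neg_distrib]
        _ ≤ _ := Finset.sum_le_sum fun i _ => hterm i
      have hsplit : (1/(N:ℝ)) * ∑ i, ℓ' ⟪v, x i⟫ * ⟪δ, x i⟫
          - (1/(N:ℝ)) * ∑ i, ℓ' (⟪v, x i⟫ + τ * ⟪δ, x i⟫) * ⟪δ, x i⟫
          = (1/(N:ℝ)) * ∑ i, (ℓ' ⟪v, x i⟫ - ℓ' (⟪v, x i⟫ + τ * ⟪δ, x i⟫)) * ⟪δ, x i⟫ := by
        rw [← mul_sub, ← Finset.sum_sub_distrib]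
        congr 1
        apply Finset.sum_congr rfl
        intro i _
        ring
      have hHeq : (1/(N:ℝ)) * (H₀ * τ * (σmax^2 * ‖δ‖^2)) = H * τ * ‖δ‖^2 := by
        rw [hHdef]; field_simp
      have h7 : -(H * τ * ‖δ‖^2) ≤ (1/(N:ℝ)) * ∑ i, ℓ' ⟪v, x i⟫ * ⟪δ, x i⟫
          - (1/(N:ℝ)) * ∑ i, ℓ' (⟪v, x i⟫ + τ * ⟪δ, x i⟫) * ⟪δ, x i⟫ := by
        rw [hsplit, ← hHeq]
        have := mul_le_mul_of_nonneg_left hsumineq (by positivity : (0:ℝ) ≤ 1/(N:ℝ))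
        linarith [this]
      linarith
    have hmono : MonotoneOn g (Set.Icc 0 T) := by
      apply monotoneOn_of_deriv_nonneg (convex_Icc 0 T)
      · exact fun τ _ => ((hg' τ).continuousAt).continuousWithinAt
      · exact fun τ _ => ((hg' τ).differentiableAt).differentiableWithinAt
      · intro τ hτ
        rw [interior_Icc] at hτ
        rw [(hg' τ).deriv]
        exact hkey τ hτ.1.le hτ.2.le
    have h8 := hmono (Set.mem_Icc.mpr ⟨le_rfl, hT0⟩) (Set.mem_Icc.mpr ⟨hT0, le_rfl⟩) hT0
    have h9 : g 0 = 0 := by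
      simp [hgdef]
    rw [h9] at h8
    simp only [hgdef] at h8
    linarith
  -- positivity of L
  have hLpos : ∀ v, 0 < L v := by
    intro v
    rw [hLdef]
    apply mul_pos (by positivity)
    exact Finset.sum_pos (fun i _ => hℓpos _) ⟨⟨0, hN⟩, Finset.mem_univ _⟩
  have hsumL : ∀ v : EuclideanSpace ℝ (Fin d), ∑ i, ℓ ⟪v, x i⟫ = N * L v := by
    intro v
    rw [hLdef]
    field_simp
  -- margin lower bound from loss bound
  have hmargL : ∀ v : EuclideanSpace ℝ (Fin d), L v ≤ L (w 1) → ∀ i, s₀ ≤ ⟪v, x i⟫ := by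
    intro v hv i
    have h1 : ℓ ⟪v, x i⟫ ≤ ∑ j, ℓ ⟪v, x j⟫ :=
      Finset.single_le_sum (f := fun j => ℓ ⟪v, x j⟫)
        (fun j _ => (hℓpos _).le) (Finset.mem_univ i)
    have h2 := hsumL v
    have h3 : ℓ ⟪v, x i⟫ ≤ ℓ s₀ := by
      rw [hs₀]
      linarith [mul_le_mul_of_nonneg_left hv hNR.le]
    exact (hanti.le_iff_ge).mp h3
  -- Lyapunov function (scaled to avoid division)
  obtain ⟨Φ, hΦeq⟩ : ∃ Φ : ℕ → ℝ, ∀ t : ℕ,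
      Φ t = 2*(1-β) * L (w t) + η*β * ‖m (t-1)‖^2 := ⟨_, fun _ => rfl⟩
  obtain ⟨c₃, hc₃def⟩ : ∃ c : ℝ, c = η * (2*(1-β) - (1-β)*η*H) := ⟨_, rfl⟩
  have hc₂pos : 0 < η * ((2-β) - (1-β)*η*H) := by
    apply mul_pos hη
    linarith [mul_pos hβ' (by linarith : (0:ℝ) < 2 - η*H), hβ0]
  have hc₃pos : 0 < c₃ := by
    rw [hc₃def]
    apply mul_pos hη
    linarith [mul_pos hβ' (by linarith : (0:ℝ) < 2 - η*H)]
  have hΦ1 : Φ 1 = 2*(1-β) * L (w 1) := by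
    rw [hΦeq 1, show (1:ℕ)-1 = 0 from rfl, hm0, norm_zero]
    ring
  have hΦnn : ∀ t, 0 ≤ Φ t := by
    intro t
    rw [hΦeq t]
    nlinarith [hLpos (w t), mul_nonneg (mul_nonneg hη.le hβ0) (sq_nonneg ‖m (t-1)‖), hβ']
  -- the step lemma
  have step : ∀ t : ℕ, 1 ≤ t → Φ t ≤ 2*(1-β) * L (w 1) →
      Φ (t+1) ≤ Φ t - c₃ * ‖m t‖^2 := by
    intro t ht hΦt
    have hnn : (0:ℝ) ≤ η*β * ‖m (t-1)‖^2 :=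
      mul_nonneg (mul_nonneg hη.le hβ0) (sq_nonneg _)
    have hΦtE : 2*(1-β) * L (w t) + η*β * ‖m (t-1)‖^2 ≤ 2*(1-β) * L (w 1) := by
      rw [← hΦeq t]; exact hΦt
    have hLt : L (w t) ≤ L (w 1) := by
      have h1 : 2*(1-β) * L (w t) ≤ 2*(1-β) * L (w 1) := by linarith
      exact le_of_mul_le_mul_left h1 (by linarith)
    have hmargt : ∀ i, s₀ ≤ ⟪w t, x i⟫ := hmargL _ hLt
    have hΦt1eq : Φ (t+1) = 2*(1-β) * L (w (t+1)) + η*β * ‖m t‖^2 := by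
      simpa using hΦeq (t+1)
    by_cases hm : m t = 0
    · have hw' : w (t+1) = w t := by rw [hwrec t ht, hm, smul_zero, sub_zero]
      rw [hΦt1eq, hw', hm, hΦeq t]
      simp only [norm_zero]
      linarith [hnn]
    · obtain ⟨δ, hδdef⟩ : ∃ δ : EuclideanSpace ℝ (Fin d), δ = -(η • m t) := ⟨_, rfl⟩
      have hδnorm : ‖δ‖ = η * ‖m t‖ := by
        rw [hδdef, norm_neg, norm_smul, Real.norm_eq_abs, abs_of_pos hη]
      have hgδ : ⟪gradL (w t), δ⟫ = -(η * ⟪gradL (w t), m t⟫) := by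
        rw [hδdef, inner_neg_right, real_inner_smul_right]
      -- momentum inner product bound (scaled)
      have hgm : (2-β) * ‖m t‖^2 - β * ‖m (t-1)‖^2 ≤ 2*(1-β) * ⟪gradL (w t), m t⟫ := by
        have hrec := hmrec t ht
        have h1 : (1-β) • gradL (w t) = m t - β • m (t-1) := by
          rw [hrec]; module
        have h2 : (1-β) * ⟪gradL (w t), m t⟫ = ⟪m t, m t⟫ - β * ⟪m (t-1), m t⟫ := by
          rw [← real_inner_smul_left, h1, inner_sub_left, real_inner_smul_left]
        have h3 : ⟪m (t-1), m t⟫ ≤ (‖m (t-1)‖^2 + ‖m t‖^2)/2 := by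
          have h4 := real_inner_le_norm (m (t-1)) (m t)
          nlinarith [sq_nonneg (‖m (t-1)‖ - ‖m t‖)]
        have h5 : ⟪m t, m t⟫ = ‖m t‖^2 := real_inner_self_eq_norm_sq _
        have h6 := mul_le_mul_of_nonneg_left h3 hβ0
        linarith [h2, h5, h6]
      -- the crossing time T
      have hne : (Finset.univ : Finset (Fin N)).Nonempty := ⟨⟨0, hN⟩, Finset.mem_univ _⟩
      obtain ⟨r, hrdef⟩ : ∃ r : Fin N → ℝ, ∀ i : Fin N,
          r i = if ⟪δ, x i⟫ < 0 then (s₀ - ⟪w t, x i⟫)/(⟪δ, x i⟫) else 1 :=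
        ⟨_, fun _ => rfl⟩
      obtain ⟨T, hTdef⟩ : ∃ T : ℝ, T = min 1 (Finset.univ.inf' hne r) := ⟨_, rfl⟩
      have hr0 : ∀ i, 0 ≤ r i := by
        intro i
        rw [hrdef i]
        split_ifs with h
        · rw [div_nonneg_iff]
          right
          constructor <;> linarith [hmargt i]
        · norm_num
      have hT0 : 0 ≤ T := by
        rw [hTdef]
        exact le_min zero_le_one (Finset.le_inf' hne _ fun i _ => hr0 i)
      have hT1 : T ≤ 1 := by
        rw [hTdef]; exact min_le_left _ _
      have hmargτ : ∀ τ : ℝ, 0 ≤ τ → τ ≤ T → ∀ i, s₀ ≤ ⟪w t, x i⟫ + τ * ⟪δ, x i⟫ := by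
        intro τ h0 h1 i
        by_cases hbi : ⟪δ, x i⟫ < 0
        · have hri : T ≤ r i := by
            rw [hTdef]
            exact (min_le_right 1 _).trans (Finset.inf'_le _ (Finset.mem_univ i))
          rw [hrdef i] at hri
          simp only [if_pos hbi] at hri
          have h2 : τ ≤ (s₀ - ⟪w t, x i⟫)/(⟪δ, x i⟫) := le_trans h1 hri
          have h3 := mul_le_mul_of_nonpos_right h2 hbi.le
          rw [div_mul_cancel₀ _ (ne_of_lt hbi)] at h3
          linarith
        · push_neg at hbi
          linarith [hmargt i, mul_nonneg h0 hbi]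
      -- partial-step loss bound
      have hLT : ∀ T' : ℝ, 0 ≤ T' → T' ≤ T →
          2*(1-β) * L (w t + T' • δ)
            ≤ Φ t - T' * (η * ((2-β) - (1-β)*η*H)) * ‖m t‖^2 := by
        intro T' h0 h1
        have hdes := descent (w t) δ T' h0
          (fun τ hτ0 hτ1 i => hmargτ τ hτ0 (hτ1.trans h1) i)
        rw [hgδ, hδnorm] at hdes
        have hT'1 : T' ≤ 1 := h1.trans hT1
        have A1 := mul_le_mul_of_nonneg_left hdes (by linarith : (0:ℝ) ≤ 2*(1-β))
        have A2 := mul_le_mul_of_nonpos_left hgm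
          (by linarith [mul_nonneg h0 hη.le] : -(T'*η) ≤ 0)
        have hT'sq : T'^2 ≤ T' := by nlinarith [mul_nonneg h0 (sub_nonneg.mpr hT'1)]
        have A3 := mul_le_mul_of_nonneg_left hT'sq
          (mul_nonneg (mul_nonneg (mul_nonneg hβ'.le hHpos.le) (sq_nonneg η))
            (sq_nonneg ‖m t‖) : (0:ℝ) ≤ (1-β)*H*η^2*‖m t‖^2)
        have A4 := mul_le_mul_of_nonneg_right hT'1
          (mul_nonneg (mul_nonneg hη.le hβ0) (sq_nonneg ‖m (t-1)‖))
        rw [hΦeq t]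
        linarith only [A1, A2, A3, A4]
      have hΦtexp := hΦeq t
      -- show T = 1
      have hT1' : T = 1 := by
        by_contra hTne
        have hTlt : T < 1 := lt_of_le_of_ne hT1 hTne
        obtain ⟨i, -, hieq⟩ := Finset.exists_mem_eq_inf' hne r
        have hinfT : T = r i := by
          rcases min_cases 1 (Finset.univ.inf' hne r) with ⟨h1, h2⟩ | ⟨h1, h2⟩
          · rw [hTdef] at hTlt
            rw [h1] at hTlt
            exact absurd hTlt (lt_irrefl _)
          · rw [hTdef, h1, hieq]
        have hbi : ⟪δ, x i⟫ < 0 := by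
          by_contra hbi
          rw [hrdef i] at hinfT
          simp only [if_neg hbi] at hinfT
          rw [hinfT] at hTlt
          exact absurd hTlt (lt_irrefl _)
        have hTri : T = (s₀ - ⟪w t, x i⟫)/(⟪δ, x i⟫) := by
          rw [hinfT, hrdef i]
          simp only [if_pos hbi]
        have hmTi : ⟪w t, x i⟫ + T * ⟪δ, x i⟫ = s₀ := by
          rw [hTri, div_mul_cancel₀ _ (ne_of_lt hbi)]
          ring
        -- loss at the crossing point is at least L (w 1)
        have hLcross : L (w 1) ≤ L (w t + T • δ) := by
          have h2 : ℓ (⟪w t + T • δ, x i⟫) ≤ ∑ j, ℓ (⟪w t + T • δ, x j⟫) :=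
            Finset.single_le_sum (f := fun j => ℓ ⟪w t + T • δ, x j⟫)
              (fun j _ => (hℓpos _).le) (Finset.mem_univ i)
          rw [hinner (w t) δ T i, hmTi, hsumL, hs₀] at h2
          exact le_of_mul_le_mul_left h2 hNR
        have hLTT := hLT T hT0 le_rfl
        rw [hΦeq t] at hLTT
        have hPpos : 0 < ‖m t‖^2 := by
          have := norm_pos_iff.mpr hm
          positivity
        have hT00 : T = 0 := by
          have h2β : (0:ℝ) ≤ 2*(1-β) := by linarith
          have hT0' : T ≤ 0 := by
            nlinarith only [mul_le_mul_of_nonneg_left hLcross h2β,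
              mul_pos hc₂pos hPpos, hΦtE, hLTT]
          exact le_antisymm hT0' hT0
        -- hence the margin for i is exactly s₀
        have hai : ⟪w t, x i⟫ = s₀ := by
          have h1 : (s₀ - ⟪w t, x i⟫)/(⟪δ, x i⟫) = 0 := by rw [← hTri, hT00]
          rcases div_eq_zero_iff.mp h1 with h2 | h2
          · linarith
          · exact absurd h2 (ne_of_lt hbi)
        -- N L (w 1) ≤ N L (w t), so L (w t) = L (w 1)
        have hLge : (N:ℝ) * L (w 1) ≤ (N:ℝ) * L (w t) := by
          rw [← hs₀, ← hai, ← hsumL]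
          exact Finset.single_le_sum (f := fun j => ℓ ⟪w t, x j⟫)
            (fun j _ => (hℓpos _).le) (Finset.mem_univ i)
        have hLeq : L (w t) = L (w 1) :=
          le_antisymm hLt (le_of_mul_le_mul_left hLge hNR)
        -- momentum must vanish
        have hmprev : β • m (t-1) = 0 := by
          have h1 : η*β * ‖m (t-1)‖^2 ≤ 0 := by
            rw [hLeq] at hΦtE
            linarith only [hΦtE]
          rcases eq_or_lt_of_le hβ0 with hβz | hβz
          · rw [← hβz, zero_smul]
          · have h2 : ‖m (t-1)‖^2 ≤ 0 := by
              have h3 : 0 < η*β := mul_pos hη hβz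
              nlinarith only [h1, h3]
            have h5 : ‖m (t-1)‖^2 = 0 := le_antisymm h2 (sq_nonneg _)
            have h6 : ‖m (t-1)‖ = 0 := by
              exact (pow_eq_zero_iff two_ne_zero).mp h5
            rw [norm_eq_zero.mp h6, smul_zero]
        have hmt : m t = (1-β) • gradL (w t) := by
          rw [hmrec t ht, hmprev, zero_add]
        -- all indices equal i
        have huniv : (Finset.univ : Finset (Fin N)) = {i} := by
          by_contra hj
          have hex : ∃ j : Fin N, j ≠ i := by
            by_contra hc
            push_neg at hc
            apply hj
            ext k
            simp [hc k]
          obtain ⟨j, hji⟩ := hex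
          have h1 : ℓ (⟪w t, x i⟫) + ∑ k ∈ Finset.univ.erase i, ℓ (⟪w t, x k⟫)
              = ∑ k, ℓ (⟪w t, x k⟫) :=
            Finset.add_sum_erase Finset.univ (fun k => ℓ ⟪w t, x k⟫) (Finset.mem_univ i)
          have h3 : 0 < ∑ k ∈ Finset.univ.erase i, ℓ (⟪w t, x k⟫) :=
            Finset.sum_pos (fun k _ => hℓpos _)
              ⟨j, Finset.mem_erase.mpr ⟨hji, Finset.mem_univ j⟩⟩
          have h2 := hsumL (w t)
          have h5 : ℓ (⟪w t, x i⟫) = (N:ℝ) * L (w t) := by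
            rw [hai, hs₀, hLeq]
          linarith only [h1, h2, h3, h5]
        -- but then the step direction does not decrease margin i
        have hbi' : 0 ≤ ⟪δ, x i⟫ := by
          have hgx := hgraddef (w t)
          have hsum1 : ∑ j, ℓ' ⟪w t, x j⟫ • x j = ℓ' ⟪w t, x i⟫ • x i := by
            rw [huniv, Finset.sum_singleton]
          rw [hδdef, inner_neg_left, real_inner_smul_left, hmt, real_inner_smul_left,
            hgx, hsum1, real_inner_smul_left, real_inner_smul_left]
          have h1 := hℓ'neg (⟪w t, x i⟫)
          have h2 : (0:ℝ) ≤ ⟪x i, x i⟫ := real_inner_self_nonneg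
          have h3 : (0:ℝ) < 1/(N:ℝ) := by positivity
          have h4 : (0:ℝ) ≤ η * ((1-β) * ((1/(N:ℝ)) * (-ℓ' ⟪w t, x i⟫ * ⟪x i, x i⟫))) :=
            mul_nonneg hη.le (mul_nonneg hβ'.le (mul_nonneg h3.le
              (mul_nonneg (by linarith) h2)))
          linarith [h4]
        exact absurd hbi (not_lt.mpr hbi')
      -- conclude with the full step
      have hw1 : w (t+1) = w t + (1:ℝ) • δ := by
        rw [hwrec t ht, hδdef, one_smul, sub_eq_add_neg]
      have hLT1 := hLT 1 zero_le_one hT1'.ge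
      rw [← hw1] at hLT1
      rw [hΦt1eq, hΦeq t, hc₃def]
      rw [hΦeq t] at hLT1
      linarith only [hLT1]
  -- Φ is bounded by its initial value
  have key : ∀ t : ℕ, 1 ≤ t → Φ t ≤ 2*(1-β) * L (w 1) := by
    intro t
    induction t with
    | zero => intro h; omega
    | succ n ih =>
      intro h
      rcases Nat.eq_or_lt_of_le h with h1 | h1
      · rw [← h1]
        exact hΦ1.le
      · have hn : 1 ≤ n := by omega
        have h2 := step n hn (ih hn)
        have h3 : 0 ≤ c₃ * ‖m n‖^2 := mul_nonneg hc₃pos.le (sq_nonneg _)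
        linarith [ih hn]
  have decr : ∀ t : ℕ, 1 ≤ t → Φ (t+1) ≤ Φ t - c₃ * ‖m t‖^2 :=
    fun t ht => step t ht (key t ht)
  -- summability of ‖m t‖²
  have hsumbd : ∀ n : ℕ, ∑ t ∈ Finset.range n, ‖m (t+1)‖^2 ≤ Φ 1 / c₃ := by
    intro n
    have h1 : ∀ t : ℕ, c₃ * ‖m (t+1)‖^2 ≤ Φ (t+1) - Φ (t+2) := by
      intro t
      have := decr (t+1) (by omega)
      linarith
    have h2 : ∑ t ∈ Finset.range n, c₃ * ‖m (t+1)‖^2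
        ≤ ∑ t ∈ Finset.range n, (Φ (t+1) - Φ (t+2)) :=
      Finset.sum_le_sum fun t _ => h1 t
    have h3 : ∑ t ∈ Finset.range n, (Φ (t+1) - Φ (t+2)) = Φ 1 - Φ (n+1) := by
      have h4 := Finset.sum_range_sub' (fun t => Φ (t+1)) n
      simpa using h4
    rw [h3, ← Finset.mul_sum] at h2
    have h4 := hΦnn (n+1)
    rw [le_div_iff₀ hc₃pos]
    linarith [h2, h4]
  have hsummable : Summable (fun t : ℕ => ‖m (t+1)‖^2) :=
    summable_of_sum_range_le (fun t => sq_nonneg _) hsumbd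
  have hmsq : Tendsto (fun t : ℕ => ‖m (t+1)‖^2) atTop (𝓝 0) :=
    hsummable.tendsto_atTop_zero
  have hmnorm : Tendsto (fun t : ℕ => ‖m (t+1)‖) atTop (𝓝 0) := by
    have h1 : Tendsto (fun t : ℕ => Real.sqrt (‖m (t+1)‖^2)) atTop (𝓝 (Real.sqrt 0)) :=
      (Real.continuous_sqrt.tendsto 0).comp hmsq
    rw [Real.sqrt_zero] at h1
    convert h1 using 2 with t
    rw [Real.sqrt_sq (norm_nonneg _)]
  have hmtend : Tendsto m atTop (𝓝 0) := by
    rw [← tendsto_add_atTop_iff_nat 1]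
    exact tendsto_zero_iff_norm_tendsto_zero.mpr hmnorm
  have hgradrec : ∀ t : ℕ, gradL (w (t+1)) = (1-β)⁻¹ • (m (t+1) - β • m t) := by
    intro t
    have h1 := hmrec (t+1) (by omega)
    simp only [Nat.add_sub_cancel] at h1
    rw [h1, show β • m t + (1-β) • gradL (w (t+1)) - β • m t
      = (1-β) • gradL (w (t+1)) by abel]
    rw [smul_smul, inv_mul_cancel₀ (by linarith : (1:ℝ)-β ≠ 0), one_smul]
  have hgradtend : Tendsto (fun t : ℕ => gradL (w t)) atTop (𝓝 0) := by
    rw [← tendsto_add_atTop_iff_nat 1]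
    have h2 : Tendsto (fun t : ℕ => m (t+1)) atTop (𝓝 0) := by
      rw [tendsto_add_atTop_iff_nat 1]
      exact hmtend
    have h1 : Tendsto (fun t : ℕ => (1-β)⁻¹ • (m (t+1) - β • m t)) atTop (𝓝 0) := by
      have h3 := (h2.sub (hmtend.const_smul β)).const_smul ((1:ℝ)-β)⁻¹
      simpa using h3
    have h4 : Tendsto (fun t : ℕ => gradL (w (t+1))) atTop (𝓝 0) :=
      h1.congr fun t => (hgradrec t).symm
    exact h4
  have hgradnormtend : Tendsto (fun t : ℕ => ‖gradL (w t)‖) atTop (𝓝 0) := by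
    have := hgradtend.norm
    simpa using this
  refine ⟨hgradnormtend, ?_⟩
  -- Part 2: margins diverge
  intro i
  have hC : 0 < ⟪u, x i⟫ := hu i
  have hLt : ∀ t : ℕ, 1 ≤ t → L (w t) ≤ L (w 1) := by
    intro t ht
    have h1 := key t ht
    rw [hΦeq t] at h1
    have h3 : (0:ℝ) ≤ η*β*‖m (t-1)‖^2 :=
      mul_nonneg (mul_nonneg hη.le hβ0) (sq_nonneg _)
    have h2 : 2*(1-β) * L (w t) ≤ 2*(1-β) * L (w 1) := by linarith
    exact le_of_mul_le_mul_left h2 (by linarith)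
  have hmarg : ∀ t : ℕ, 1 ≤ t → s₀ ≤ ⟪w t, x i⟫ := fun t ht => hmargL _ (hLt t ht) i
  have hbound : ∀ t : ℕ, -ℓ' ⟪w t, x i⟫ ≤ ((N:ℝ) * ‖u‖ / ⟪u, x i⟫) * ‖gradL (w t)‖ := by
    intro t
    have h2 : ∀ j : Fin N, (0:ℝ) ≤ -(ℓ' ⟪w t, x j⟫ * ⟪u, x j⟫) := by
      intro j
      have h2a := hℓ'neg ⟪w t, x j⟫
      have h2b := (hu j).le
      nlinarith only [h2a, h2b]
    have hstep1 : (1/(N:ℝ)) * (-(ℓ' ⟪w t, x i⟫ * ⟪u, x i⟫))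
        ≤ (1/(N:ℝ)) * ∑ j, -(ℓ' ⟪w t, x j⟫ * ⟪u, x j⟫) :=
      mul_le_mul_of_nonneg_left
        (Finset.single_le_sum (f := fun j => -(ℓ' ⟪w t, x j⟫ * ⟪u, x j⟫))
          (fun j _ => h2 j) (Finset.mem_univ i))
        (by positivity : (0:ℝ) ≤ 1/(N:ℝ))
    have hstep2 : (1/(N:ℝ)) * ∑ j, -(ℓ' ⟪w t, x j⟫ * ⟪u, x j⟫) = -⟪u, gradL (w t)⟫ := by
      rw [hgu, Finset.sum_neg_distrib]
      ring
    have h1 : (1/(N:ℝ)) * (-(ℓ' ⟪w t, x i⟫ * ⟪u, x i⟫)) ≤ -⟪u, gradL (w t)⟫ :=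
      le_of_le_of_eq hstep1 hstep2
    have h4 : -⟪u, gradL (w t)⟫ ≤ ‖u‖ * ‖gradL (w t)‖ := by
      have h5 := abs_real_inner_le_norm u (gradL (w t))
      have h6 := neg_abs_le ⟪u, gradL (w t)⟫
      linarith
    rw [div_mul_eq_mul_div, le_div_iff₀ hC]
    have h7 : (N:ℝ) * ((1/(N:ℝ)) * (-(ℓ' ⟪w t, x i⟫ * ⟪u, x i⟫)))
        = -(ℓ' ⟪w t, x i⟫ * ⟪u, x i⟫) := by
      rw [← mul_assoc, mul_one_div_cancel (ne_of_gt hNR), one_mul]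
    have h8 := mul_le_mul_of_nonneg_left (h1.trans h4) hNR.le
    rw [h7] at h8
    linarith [h8]
  have hℓ'tendi : Tendsto (fun t : ℕ => ℓ' ⟪w t, x i⟫) atTop (𝓝 0) := by
    apply tendsto_of_tendsto_of_tendsto_of_le_of_le'
      (g := fun t : ℕ => -(((N:ℝ) * ‖u‖ / ⟪u, x i⟫) * ‖gradL (w t)‖))
      (h := fun t : ℕ => (0:ℝ))
    · have h1 := (hgradnormtend.const_mul ((N:ℝ) * ‖u‖ / ⟪u, x i⟫)).neg
      simpa using h1
    · exact tendsto_const_nhds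
    · filter_upwards with t
      linarith [hbound t]
    · filter_upwards with t
      exact (hℓ'neg _).le
  rw [tendsto_atTop]
  intro M
  have hsM : s₀ ≤ max M s₀ := le_max_right _ _
  have hlip : LipschitzOnWith (Real.toNNReal H₀) ℓ' (Set.Ici s₀) := by
    apply LipschitzOnWith.of_dist_le_mul
    intro a ha b hb
    rw [Real.dist_eq, Real.dist_eq, Real.coe_toNNReal _ hH₀pos.le]
    exact hH₀ a b ha hb
  have hcont : ContinuousOn ℓ' (Set.Icc s₀ (max M s₀)) :=
    (hlip.continuousOn).mono Set.Icc_subset_Ici_self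
  obtain ⟨cm, hcm_mem, hcmax⟩ :=
    (isCompact_Icc).exists_isMaxOn (Set.nonempty_Icc.mpr hsM) hcont
  have hv : ℓ' cm < 0 := hℓ'neg cm
  have hev1 : ∀ᶠ t : ℕ in atTop, ℓ' cm < ℓ' ⟪w t, x i⟫ :=
    hℓ'tendi.eventually (eventually_gt_nhds hv)
  filter_upwards [hev1, eventually_ge_atTop 1] with t h1 h2
  by_contra hMc
  push_neg at hMc
  have hmem : ⟪w t, x i⟫ ∈ Set.Icc s₀ (max M s₀) :=
    ⟨hmarg t h2, le_trans hMc.le (le_max_left _ _)⟩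
  exact absurd (hcmax hmem) (not_le.mpr h1)
end
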